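/- arXiv:2012.02851 — 9 statements merged into one kernel-verified Lean document; each statement's English description precedes it below -/
import Mathlib

section
/- Let G and H be groups and φ : G → H an isomorphism of their power graphs. Then φ maps the set of elements of finite order of G onto the set of elements of finite order of H. -/
def powerGraph (G : Type*) [Group G] : SimpleGraph G where
  Adj x y := x ≠ y ∧ ((∃ n : ℤ, n ≠ 0 ∧ y = x ^ n) ∨ ∃ n : ℤ, n ≠ 0 ∧ x = y ^ n)
  symm := ⟨fun _ _ ⟨h, h2⟩ => ⟨h.symm, h2.symm⟩⟩
  loopless := ⟨fun _ ⟨h, _⟩ => h rfl⟩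

def enhancedPowerGraph (G : Type*) [Group G] : SimpleGraph G where
  Adj x y := x ≠ y ∧ ∃ z : G, x ∈ Subgroup.zpowers z ∧ y ∈ Subgroup.zpowers z
  symm := ⟨fun _ _ ⟨h, z, hx, hy⟩ => ⟨h.symm, z, hy, hx⟩⟩
  loopless := ⟨fun _ ⟨h, _⟩ => h rfl⟩

/-!
The torsion elements form the closed neighbourhood `N[1]` of `1`, and torsion is constant on
closed neighbourhoods. An element `z` of infinite order has exactly one true twin besides itself,
namely `z⁻¹`, and `N[z]` is not a clique since `z²` and `z³` are not adjacent; both properties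
are invariant under graph isomorphisms. So if an isomorphism sent a torsion element to one of
infinite order, `N[1]` would be infinite and every torsion element would have both properties.
But then the twin `u ≠ 1` of `1` is an involution, every torsion `y ∉ {1, u}` satisfies `y² = u`
(its twins `y⁻¹` and `y * u` must coincide), and so `N[y]` lies in the clique `{1, u, y, y⁻¹}`.
Hence the torsion set is `{1, u}`, which is finite.
-/

theorem Set.eq_or_eq_or_eq_of_ncard_eq_two {α : Type*} {s : Set α} (hs : s.ncard = 2)
    {a b c : α} (ha : a ∈ s) (hb : b ∈ s) (hc : c ∈ s) : a = b ∨ a = c ∨ b = c := by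
  by_contra! h
  have := (Set.two_lt_ncard_iff (Set.finite_of_ncard_ne_zero (by omega))).mpr
    ⟨a, b, c, ha, hb, hc, h.1, h.2.1, h.2.2⟩
  omega

theorem IsOfFinOrder.of_zpow {G : Type*} [Group G] {a : G} {n : ℤ} (h : IsOfFinOrder (a ^ n))
    (hn : n ≠ 0) : IsOfFinOrder a := by
  rcases Int.natAbs_eq n with hn' | hn'
  · rw [hn', zpow_natCast] at h
    exact h.of_pow (by omega)
  · rw [hn', zpow_neg, zpow_natCast, isOfFinOrder_inv_iff] at h
    exact h.of_pow (by omega)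

namespace SimpleGraph

variable {V W : Type*} (Γ : SimpleGraph V)

def closedNeighborSet (v : V) : Set V := insert v (Γ.neighborSet v)

theorem self_mem_closedNeighborSet (v : V) : v ∈ Γ.closedNeighborSet v := Set.mem_insert v _

def trueTwins (v : V) : Set V := {w | Γ.closedNeighborSet w = Γ.closedNeighborSet v}

namespace Iso

variable {Γ} {Γ' : SimpleGraph W} (φ : Γ ≃g Γ') (v : V)

theorem image_closedNeighborSet :
    φ '' Γ.closedNeighborSet v = Γ'.closedNeighborSet (φ v) := by
  rw [closedNeighborSet, Set.image_insert_eq, φ.image_neighborSet, closedNeighborSet]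

theorem image_trueTwins : φ '' Γ.trueTwins v = Γ'.trueTwins (φ v) := by
  ext w
  obtain ⟨a, rfl⟩ := φ.surjective w
  simp only [trueTwins, Set.mem_ofPred_eq, ← image_closedNeighborSet,
    (Set.image_injective.mpr φ.injective).eq_iff, φ.injective.mem_set_image]

theorem ncard_trueTwins : (Γ'.trueTwins (φ v)).ncard = (Γ.trueTwins v).ncard := by
  rw [← image_trueTwins, Set.ncard_image_of_injective _ φ.injective]

theorem isClique_image_iff {s : Set V} : Γ'.IsClique (φ '' s) ↔ Γ.IsClique s := by
  have h_adj : Function.onFun Γ'.Adj φ = Γ.Adj := by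
    ext a b
    exact φ.map_adj_iff
  rw [IsClique, φ.injective.injOn.pairwise_image, h_adj]

theorem isClique_closedNeighborSet_iff :
    Γ'.IsClique (Γ'.closedNeighborSet (φ v)) ↔ Γ.IsClique (Γ.closedNeighborSet v) := by
  rw [← image_closedNeighborSet, isClique_image_iff]

end Iso

end SimpleGraph

open Subgroup SimpleGraph

namespace powerGraph

variable {G : Type*} [Group G]

local notation "N[" a "]" => SimpleGraph.closedNeighborSet (powerGraph _) a

theorem mem_closedNeighborSet_iff {a w : G} :
    w ∈ N[a] ↔ (∃ n : ℤ, n ≠ 0 ∧ w = a ^ n) ∨ ∃ n : ℤ, n ≠ 0 ∧ a = w ^ n := by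
  constructor
  · rintro (rfl | ⟨-, h⟩)
    · exact Or.inl ⟨1, one_ne_zero, (zpow_one w).symm⟩
    · exact h
  · intro h
    by_cases hw : w = a
    · exact Or.inl hw
    · exact Or.inr ⟨Ne.symm hw, h⟩

theorem closedNeighborSet_inv (a : G) : N[a⁻¹] = N[a] := by
  have h_neg (b c : G) : (∃ n : ℤ, n ≠ 0 ∧ b = c ^ (-n)) ↔ ∃ n : ℤ, n ≠ 0 ∧ b = c ^ n :=
    ⟨fun ⟨n, hn, h⟩ => ⟨-n, neg_ne_zero.mpr hn, h⟩,
      fun ⟨n, hn, h⟩ => ⟨-n, neg_ne_zero.mpr hn, by rwa [neg_neg]⟩⟩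
  ext w
  simp only [mem_closedNeighborSet_iff, inv_zpow', inv_eq_iff_eq_inv, ← zpow_neg, h_neg]

theorem isOfFinOrder_iff_of_mem_closedNeighborSet {a w : G} (h : w ∈ N[a]) :
    IsOfFinOrder w ↔ IsOfFinOrder a := by
  rcases mem_closedNeighborSet_iff.mp h with ⟨n, hn, rfl⟩ | ⟨n, hn, rfl⟩
  · exact ⟨fun h => h.of_zpow hn, fun h => h.zpow⟩
  · exact ⟨fun h => h.zpow, fun h => h.of_zpow hn⟩

theorem closedNeighborSet_one : N[(1 : G)] = {x | IsOfFinOrder x} := by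
  ext w
  simp only [mem_closedNeighborSet_iff, one_zpow, Set.mem_ofPred_eq, isOfFinOrder_iff_zpow_eq_one]
  constructor
  · rintro (⟨-, -, rfl⟩ | ⟨n, hn, h⟩)
    · exact ⟨1, one_ne_zero, one_zpow 1⟩
    · exact ⟨n, hn, h.symm⟩
  · rintro ⟨n, hn, h⟩
    exact Or.inr ⟨n, hn, h.symm⟩

theorem exists_ne_zero_zpow_eq_iff {a b : G} (hb : IsOfFinOrder b) :
    (∃ n : ℤ, n ≠ 0 ∧ a = b ^ n) ↔ a ∈ zpowers b := by
  rw [mem_zpowers_iff]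
  refine ⟨fun ⟨n, _, h⟩ => ⟨n, h.symm⟩, fun ⟨n, h⟩ => ?_⟩
  by_cases hn : n = 0
  · refine ⟨orderOf b, by exact_mod_cast hb.orderOf_pos.ne', ?_⟩
    rw [← h, hn, zpow_zero, zpow_natCast, pow_orderOf_eq_one]
  · exact ⟨n, hn, h.symm⟩

theorem mem_closedNeighborSet_iff_of_isOfFinOrder {a w : G} (ha : IsOfFinOrder a) (ha1 : a ≠ 1) :
    w ∈ N[a] ↔ zpowers w ≤ zpowers a ∨ zpowers a ≤ zpowers w := by
  rw [mem_closedNeighborSet_iff, zpowers_le, zpowers_le, exists_ne_zero_zpow_eq_iff ha]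
  refine or_congr_right ⟨fun ⟨n, _, h⟩ => ⟨n, h.symm⟩, fun h => ?_⟩
  obtain ⟨n, rfl⟩ := mem_zpowers_iff.mp h
  exact ⟨n, by rintro rfl; exact ha1 (zpow_zero w), rfl⟩

theorem closedNeighborSet_eq_of_zpowers_eq {a b : G} (ha : IsOfFinOrder a) (hb : IsOfFinOrder b)
    (ha1 : a ≠ 1) (hb1 : b ≠ 1) (h : zpowers a = zpowers b) : N[a] = N[b] := by
  ext w
  rw [mem_closedNeighborSet_iff_of_isOfFinOrder ha ha1,
    mem_closedNeighborSet_iff_of_isOfFinOrder hb hb1, h]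

section NotIsOfFinOrder

variable {z : G}

theorem zpow_mem_closedNeighborSet_zpow_iff (hz : ¬IsOfFinOrder z) {a b : ℤ} (ha : a ≠ 0)
    (hb : b ≠ 0) : z ^ a ∈ N[z ^ b] ↔ b ∣ a ∨ a ∣ b := by
  simp only [mem_closedNeighborSet_iff, ← zpow_mul,
    (injective_zpow_iff_not_isOfFinOrder.mpr hz).eq_iff]
  refine or_congr ⟨fun ⟨n, _, h⟩ => ⟨n, h⟩, fun ⟨n, h⟩ => ⟨n, ?_, h⟩⟩
    ⟨fun ⟨n, _, h⟩ => ⟨n, h⟩, fun ⟨n, h⟩ => ⟨n, ?_, h⟩⟩ <;> rintro rfl <;> simp_all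

theorem not_isClique_closedNeighborSet (hz : ¬IsOfFinOrder z) :
    ¬(powerGraph G).IsClique N[z] := by
  intro h
  have h2 : z ^ (2 : ℤ) ∈ N[z] := by
    simpa using (zpow_mem_closedNeighborSet_zpow_iff hz two_ne_zero one_ne_zero).mpr (by simp)
  have h3 : z ^ (3 : ℤ) ∈ N[z] := by
    simpa using (zpow_mem_closedNeighborSet_zpow_iff hz three_ne_zero one_ne_zero).mpr (by simp)
  have hne : z ^ (2 : ℤ) ≠ z ^ (3 : ℤ) :=
    fun h => by simpa using injective_zpow_iff_not_isOfFinOrder.mpr hz h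
  have h23 : z ^ (2 : ℤ) ∈ N[z ^ (3 : ℤ)] := Or.inr (h h3 h2 hne.symm)
  rw [zpow_mem_closedNeighborSet_zpow_iff hz two_ne_zero three_ne_zero] at h23
  norm_num at h23

theorem closedNeighborSet_infinite (hz : ¬IsOfFinOrder z) : N[z].Infinite := by
  refine Set.infinite_of_injective_forall_mem (f := fun n : ℕ => z ^ ((n : ℤ) + 1)) ?_ ?_
  · intro m n h
    simpa using injective_zpow_iff_not_isOfFinOrder.mpr hz h
  · intro n
    simpa using (zpow_mem_closedNeighborSet_zpow_iff hz (by omega) one_ne_zero).mpr (by simp)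

theorem eq_one_or_eq_neg_one_of_closedNeighborSet_zpow_eq (hz : ¬IsOfFinOrder z) {n : ℤ}
    (hn : n ≠ 0) (h : N[z ^ n] = N[z]) : n = 1 ∨ n = -1 := by
  have hm : |n| + 1 ≠ 0 := by positivity
  have hmem : z ^ (|n| + 1) ∈ N[z ^ n] := by
    rw [h, ← zpow_one z, ← zpow_mul, one_mul]
    exact (zpow_mem_closedNeighborSet_zpow_iff hz hm one_ne_zero).mpr (Or.inl (one_dvd _))
  rcases (zpow_mem_closedNeighborSet_zpow_iff hz hm hn).mp hmem with hdvd | hdvd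
  · exact Int.isUnit_iff.mp
      (isUnit_of_dvd_one ((dvd_add_right ((dvd_abs n n).mpr dvd_rfl)).mp hdvd))
  · have := Int.le_of_dvd (abs_pos.mpr hn) ((dvd_abs _ _).mpr hdvd)
    omega

theorem trueTwins_eq_of_not_isOfFinOrder (hz : ¬IsOfFinOrder z) :
    (powerGraph G).trueTwins z = {z, z⁻¹} := by
  ext w
  constructor
  · intro (hw : N[w] = N[z])
    have hwz : w ∈ N[z] := hw ▸ self_mem_closedNeighborSet _ w
    rcases mem_closedNeighborSet_iff.mp hwz with ⟨n, hn, rfl⟩ | ⟨n, hn, rfl⟩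
    · rcases eq_one_or_eq_neg_one_of_closedNeighborSet_zpow_eq hz hn hw with rfl | rfl <;> simp
    · have hw' : ¬IsOfFinOrder w := fun h => hz h.zpow
      rcases eq_one_or_eq_neg_one_of_closedNeighborSet_zpow_eq hw' hn hw.symm with rfl | rfl <;>
        simp
  · rintro (rfl | rfl)
    · rfl
    · exact closedNeighborSet_inv z

theorem ncard_trueTwins_of_not_isOfFinOrder (hz : ¬IsOfFinOrder z) :
    ((powerGraph G).trueTwins z).ncard = 2 := by
  refine trueTwins_eq_of_not_isOfFinOrder hz ▸ Set.ncard_pair fun h => ?_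
  have h_zpow : z ^ (1 : ℤ) = z ^ (-1 : ℤ) := by rwa [zpow_one, zpow_neg_one]
  exact absurd (injective_zpow_iff_not_isOfFinOrder.mpr hz h_zpow) (by decide)

end NotIsOfFinOrder

theorem eq_one_or_eq_of_mem_zpowers_of_sq_eq_one {u w : G} (hu : u ^ 2 = 1)
    (hw : w ∈ zpowers u) : w = 1 ∨ w = u := by
  obtain ⟨k, rfl⟩ := mem_zpowers_iff.mp hw
  rw [zpow_eq_zpow_emod' k hu]
  rcases Int.emod_two_eq k with h | h <;> simp [h]

theorem mem_of_mem_zpowers_of_sq_eq {u y w : G} (hu : u ^ 2 = 1) (hy : y ^ 2 = u)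
    (hw : w ∈ zpowers y) : w ∈ ({1, u, y, y⁻¹} : Set G) := by
  have hy4 : y ^ 4 = 1 := by rw [show 4 = 2 * 2 from rfl, pow_mul, hy, hu]
  obtain ⟨k, rfl⟩ := mem_zpowers_iff.mp hw
  rw [zpow_eq_zpow_emod' k hy4]
  have h3 : y ^ (3 : ℤ) = y⁻¹ := by
    rw [eq_inv_iff_mul_eq_one, ← zpow_add_one]
    exact_mod_cast hy4
  have : k % 4 = 0 ∨ k % 4 = 1 ∨ k % 4 = 2 ∨ k % 4 = 3 := by omega
  rcases this with h | h | h | h <;> simp [h, h3, ← hy]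

theorem isClique_of_sq_eq {u y : G} (hu : u ^ 2 = 1) (hy : y ^ 2 = u) :
    (powerGraph G).IsClique {1, u, y, y⁻¹} := by
  have hy4 : y ^ 4 = 1 := by rw [show 4 = 2 * 2 from rfl, pow_mul, hy, hu]
  have adj {a b : G} (n : ℤ) (hn : n ≠ 0) (h : a = b ^ n) (hab : a ≠ b) :
      (powerGraph G).Adj a b :=
    ⟨hab, Or.inr ⟨n, hn, h⟩⟩
  simp only [isClique_insert, Set.mem_insert_iff, Set.mem_singleton_iff, forall_eq_or_imp,
    forall_eq]
  refine ⟨⟨⟨isClique_singleton _, adj (-1) (by decide) (by simp)⟩,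
    adj 2 (by decide) (by simp [hy]),
    adj 2 (by decide) (by simp [hy, inv_eq_of_mul_eq_one_right (by rw [← sq, hu] : u * u = 1)])⟩,
    adj 2 (by decide) (by simp [hu]), adj 4 (by decide) (by simp [hy4]),
    adj 4 (by decide) (by simp [hy4])⟩

theorem exists_sq_eq_one_closedNeighborSet_eq_one
    (h : ((powerGraph G).trueTwins 1).ncard = 2) :
    ∃ u : G, u ≠ 1 ∧ u ^ 2 = 1 ∧ N[u] = N[1] := by
  obtain ⟨u, hu, hu1⟩ := Set.exists_ne_of_one_lt_ncard (h ▸ one_lt_two) (1 : G)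
  have hu_inv : u⁻¹ ∈ (powerGraph G).trueTwins 1 := (closedNeighborSet_inv u).trans hu
  refine ⟨u, hu1, ?_, hu⟩
  rcases Set.eq_or_eq_or_eq_of_ncard_eq_two h rfl hu hu_inv with h1 | h1 | h1
  · exact absurd h1.symm hu1
  · exact absurd (inv_eq_one.mp h1.symm) hu1
  · rw [sq, mul_eq_one_iff_eq_inv]
    exact h1

section Involution

variable {u : G}

theorem mem_zpowers_of_closedNeighborSet_eq_one (hu1 : u ≠ 1) (hu2 : u ^ 2 = 1)
    (hu : N[u] = N[1]) {w : G} (hw : IsOfFinOrder w) (hw1 : w ≠ 1) (hwu : w ≠ u) :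
    u ∈ zpowers w := by
  have hu_fin : IsOfFinOrder u := by
    have := self_mem_closedNeighborSet (powerGraph G) u
    rwa [hu, closedNeighborSet_one] at this
  have hw_mem : w ∈ N[u] := by rwa [hu, closedNeighborSet_one]
  rcases (mem_closedNeighborSet_iff_of_isOfFinOrder hu_fin hu1).mp hw_mem with hle | hle
  · rcases eq_one_or_eq_of_mem_zpowers_of_sq_eq_one hu2 (zpowers_le.mp hle) with h | h
    exacts [absurd h hw1, absurd h hwu]
  · exact zpowers_le.mp hle

theorem sq_eq_of_closedNeighborSet_eq_one (hu1 : u ≠ 1) (hu2 : u ^ 2 = 1) (hu : N[u] = N[1])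
    {y : G} (hy : IsOfFinOrder y) (hy1 : y ≠ 1) (hyu : y ≠ u)
    (h_twins : ((powerGraph G).trueTwins y).ncard = 2) : y ^ 2 = u := by
  have hu_inv : u⁻¹ = u := inv_eq_of_mul_eq_one_right (by rw [← sq, hu2])
  have hu_mem := mem_zpowers_of_closedNeighborSet_eq_one hu1 hu2 hu hy hy1 hyu
  have hyu_mem : y * u ∈ zpowers y := mul_mem (mem_zpowers y) hu_mem
  have hyu1 : y * u ≠ 1 := fun h => hyu (by rw [eq_inv_of_mul_eq_one_left h, hu_inv])
  have hyuu : y * u ≠ u := fun h => hy1 (mul_eq_right.mp h)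
  have hu_mem' := mem_zpowers_of_closedNeighborSet_eq_one hu1 hu2 hu
    (hy.of_mem_zpowers hyu_mem) hyu1 hyuu
  have h_zpowers : zpowers (y * u) = zpowers y := by
    refine le_antisymm (zpowers_le.mpr hyu_mem) (zpowers_le.mpr ?_)
    simpa [mul_assoc, ← sq, hu2] using mul_mem (mem_zpowers (y * u)) hu_mem'
  have h_twin : y * u ∈ (powerGraph G).trueTwins y := closedNeighborSet_eq_of_zpowers_eq
    (hy.of_mem_zpowers hyu_mem) hy hyu1 hy1 h_zpowers
  have h_twin_inv : y⁻¹ ∈ (powerGraph G).trueTwins y := closedNeighborSet_inv y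
  rcases Set.eq_or_eq_or_eq_of_ncard_eq_two h_twins h_twin h_twin_inv rfl with h | h | h
  · rw [sq, ← hu_inv, eq_inv_iff_mul_eq_one, mul_assoc, h, mul_inv_cancel]
  · exact absurd (mul_eq_left.mp h) hu1
  · have hy2 : y ^ 2 = 1 := by rw [sq, mul_eq_one_iff_eq_inv, h]
    rcases eq_one_or_eq_of_mem_zpowers_of_sq_eq_one hy2 hu_mem with h' | h'
    exacts [absurd h' hu1, absurd h'.symm hyu]

theorem closedNeighborSet_subset_of_sq_eq (hu2 : u ^ 2 = 1)
    (hsq : ∀ w : G, IsOfFinOrder w → w ≠ 1 → w ≠ u → w ^ 2 = u)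
    {y : G} (hy : IsOfFinOrder y) (hy1 : y ≠ 1) (hyu : y ≠ u) :
    N[y] ⊆ {1, u, y, y⁻¹} := by
  intro w hw
  by_cases hw1 : w = 1
  · simp [hw1]
  by_cases hwu : w = u
  · simp [hwu]
  rcases (mem_closedNeighborSet_iff_of_isOfFinOrder hy hy1).mp hw with hle | hle
  · exact mem_of_mem_zpowers_of_sq_eq hu2 (hsq y hy hy1 hyu) (zpowers_le.mp hle)
  · have hw_fin := (isOfFinOrder_iff_of_mem_closedNeighborSet hw).mpr hy
    have := mem_of_mem_zpowers_of_sq_eq hu2 (hsq w hw_fin hw1 hwu) (zpowers_le.mp hle)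
    simp only [Set.mem_insert_iff, Set.mem_singleton_iff, hy1, hyu, false_or] at this
    rcases this with rfl | rfl <;> simp

end Involution

theorem finite_setOf_isOfFinOrder
    (h : ∀ y : G, IsOfFinOrder y →
      ((powerGraph G).trueTwins y).ncard = 2 ∧ ¬(powerGraph G).IsClique N[y]) :
    {x : G | IsOfFinOrder x}.Finite := by
  obtain ⟨u, hu1, hu2, hu⟩ := exists_sq_eq_one_closedNeighborSet_eq_one (h 1 .one).1
  have hsq (w : G) (hw : IsOfFinOrder w) (hw1 : w ≠ 1) (hwu : w ≠ u) : w ^ 2 = u :=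
    sq_eq_of_closedNeighborSet_eq_one hu1 hu2 hu hw hw1 hwu (h w hw).1
  refine (Set.toFinite {1, u}).subset fun y hy => ?_
  by_contra hy'
  simp only [Set.mem_insert_iff, Set.mem_singleton_iff, not_or] at hy'
  exact (h y hy).2 ((isClique_of_sq_eq hu2 (hsq y hy hy'.1 hy'.2)).subset
    (closedNeighborSet_subset_of_sq_eq hu2 hsq hy hy'.1 hy'.2))

end powerGraph

open powerGraph in
theorem SimpleGraph.Iso.isOfFinOrder_apply {G H : Type*} [Group G] [Group H]
    (φ : powerGraph G ≃g powerGraph H) {x : G} (hx : IsOfFinOrder x) : IsOfFinOrder (φ x) := by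
  have h_iff {y : G} (hy : IsOfFinOrder y) : IsOfFinOrder (φ y) ↔ IsOfFinOrder (φ 1) := by
    refine isOfFinOrder_iff_of_mem_closedNeighborSet ?_
    rw [← φ.image_closedNeighborSet, closedNeighborSet_one]
    exact Set.mem_image_of_mem φ hy
  by_contra hφx
  have hφ1 : ¬IsOfFinOrder (φ 1) := (h_iff hx).not.mp hφx
  refine closedNeighborSet_infinite hφ1 ?_
  rw [← φ.image_closedNeighborSet, closedNeighborSet_one]
  refine Set.Finite.image _ (finite_setOf_isOfFinOrder fun y hy => ?_)
  have hφy : ¬IsOfFinOrder (φ y) := (h_iff hy).not.mpr hφ1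
  rw [← φ.ncard_trueTwins, ← φ.isClique_closedNeighborSet_iff]
  exact ⟨ncard_trueTwins_of_not_isOfFinOrder hφy, not_isClique_closedNeighborSet hφy⟩

/-- A power graph isomorphism maps the elements of finite order onto the
elements of finite order. -/
theorem iso_maps_finite_order_onto_finite_order {G H : Type*} [Group G] [Group H]
    (φ : powerGraph G ≃g powerGraph H) :
    ⇑φ '' {x : G | IsOfFinOrder x} = {y : H | IsOfFinOrder y} := by
  refine Set.Subset.antisymm (Set.image_subset_iff.mpr fun x hx => φ.isOfFinOrder_apply hx)
    fun y hy => ⟨φ.symm y, φ.symm.isOfFinOrder_apply hy, φ.apply_symm_apply y⟩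
end

section
/- If two elements g and h of a group both have order a power of the same prime p, then g and h are adjacent in the power graph if and only if they are adjacent in the enhanced power graph. -/
/-! Two elements of `p`-power order have orders dividing one another. In a cyclic group,
divisibility of orders is enough for membership in the cyclic subgroup, since `zpowers h` already
exhausts the at most `orderOf h` solutions of `x ^ orderOf h = 1`. The generator of the cyclic
subgroup containing both elements may have infinite order, but then its only element of finite
order is `1`. Finally, a power `x ^ 0 = 1` can be rewritten as the nonzero power
`x ^ orderOf x`. -/

open Subgroup

theorem IsCyclic.mem_zpowers_of_orderOf_dvd {α : Type*} [Group α] [IsCyclic α] [Finite α]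
    {g h : α} (hgh : orderOf g ∣ orderOf h) : g ∈ zpowers h := by
  classical
  have := Fintype.ofFinite α
  let S : Finset α := {x | x ^ orderOf h = 1}
  have hsub : (zpowers h : Set α).toFinset ⊆ S := fun x hx => by
    simpa [S] using orderOf_dvd_iff_pow_eq_one.1
      (orderOf_dvd_of_mem_zpowers (Set.mem_toFinset.1 hx))
  have hcard : S.card ≤ (zpowers h : Set α).toFinset.card := by
    rw [Set.toFinset_card, Fintype.card_eq_nat_card, SetLike.coe_sort_coe, Nat.card_zpowers]
    exact IsCyclic.card_pow_eq_one_le (orderOf_pos h)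
  have hgS : g ∈ S := by simpa [S] using orderOf_dvd_iff_pow_eq_one.1 hgh
  rw [← Finset.eq_of_subset_of_card_le hsub hcard] at hgS
  simpa using hgS

section

variable {G : Type*} [Group G]

theorem eq_one_of_mem_zpowers_of_not_isOfFinOrder {x y : G}
    (hx : ¬IsOfFinOrder x) (hy : y ∈ zpowers x) (hy' : IsOfFinOrder y) : y = 1 := by
  obtain ⟨i, rfl⟩ := mem_zpowers_iff.1 hy
  obtain ⟨n, hn, hxn⟩ := hy'.exists_pow_eq_one
  have hin : i * n = 0 :=
    injective_zpow_iff_not_isOfFinOrder.2 hx (by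
      simp only [zpow_mul, zpow_natCast, hxn, zpow_zero])
  obtain rfl : i = 0 := by simpa [hn.ne'] using hin
  exact zpow_zero x

theorem mem_zpowers_of_orderOf_dvd {g h z : G} (hgz : g ∈ zpowers z) (hhz : h ∈ zpowers z)
    (hh : IsOfFinOrder h) (hgh : orderOf g ∣ orderOf h) : g ∈ zpowers h := by
  by_cases hz : IsOfFinOrder z
  · have : Finite (zpowers z) := (finite_zpowers.2 hz).to_subtype
    have hmem := IsCyclic.mem_zpowers_of_orderOf_dvd (g := (⟨g, hgz⟩ : zpowers z))
      (h := ⟨h, hhz⟩) (by simpa only [Subgroup.orderOf_mk] using hgh)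
    simpa using mem_map_of_mem (zpowers z).subtype hmem
  · obtain rfl := eq_one_of_mem_zpowers_of_not_isOfFinOrder hz hhz hh
    rw [orderOf_one, Nat.dvd_one, orderOf_eq_one_iff] at hgh
    exact hgh.symm ▸ one_mem _

theorem exists_zpow_ne_zero_of_mem_zpowers {x y : G} (hx : IsOfFinOrder x)
    (hy : y ∈ zpowers x) : ∃ n : ℤ, n ≠ 0 ∧ y = x ^ n := by
  obtain ⟨i, rfl⟩ := hy
  rcases eq_or_ne i 0 with rfl | hi
  · exact ⟨orderOf x, by exact_mod_cast hx.orderOf_pos.ne', by simp⟩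
  · exact ⟨i, hi, rfl⟩

theorem powerGraph_le_enhancedPowerGraph : powerGraph G ≤ enhancedPowerGraph G := by
  rintro x y ⟨hne, ⟨n, -, rfl⟩ | ⟨n, -, rfl⟩⟩
  · exact ⟨hne, x, mem_zpowers x, zpow_mem (mem_zpowers x) n⟩
  · exact ⟨hne, y, zpow_mem (mem_zpowers y) n, mem_zpowers y⟩

theorem powerGraph_adj_of_enhancedPowerGraph_adj {g h : G}
    (hadj : (enhancedPowerGraph G).Adj g h) (hh : IsOfFinOrder h)
    (hgh : orderOf g ∣ orderOf h) : (powerGraph G).Adj g h := by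
  obtain ⟨hne, z, hgz, hhz⟩ := hadj
  exact ⟨hne, .inr (exists_zpow_ne_zero_of_mem_zpowers hh
    (mem_zpowers_of_orderOf_dvd hgz hhz hh hgh))⟩

end

/-- For two elements of `p`-power order, adjacency in the power graph coincides with
adjacency in the enhanced power graph. -/
theorem powerGraph_adj_iff_enhanced_adj_of_prime_pow {G : Type*} [Group G] {p : ℕ}
    (hp : p.Prime) {g h : G} (hg : ∃ k : ℕ, orderOf g = p ^ k)
    (hh : ∃ k : ℕ, orderOf h = p ^ k) :
    (powerGraph G).Adj g h ↔ (enhancedPowerGraph G).Adj g h := by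
  obtain ⟨k, hgk⟩ := hg
  obtain ⟨l, hhl⟩ := hh
  have hfin {x : G} {m : ℕ} (hx : orderOf x = p ^ m) : IsOfFinOrder x :=
    orderOf_pos_iff.1 (hx ▸ pow_pos hp.pos m)
  refine ⟨fun hadj => powerGraph_le_enhancedPowerGraph hadj, fun hadj => ?_⟩
  rcases le_total k l with hkl | hlk
  · exact powerGraph_adj_of_enhancedPowerGraph_adj hadj (hfin hhl)
      (hgk ▸ hhl ▸ Nat.pow_dvd_pow p hkl)
  · exact (powerGraph_adj_of_enhancedPowerGraph_adj hadj.symm (hfin hgk)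
      (hhl ▸ hgk ▸ Nat.pow_dvd_pow p hlk)).symm
end

section
/- Let Γ be a graph such that for any vertices x, y, z, t, if x ~≃ y ~≃ z ~≃ t (where a ~≃ b means a = b or a is adjacent to b), then x ~≃ z or y ~≃ t. Then Γ contains no induced cycle of odd length at least 5. -/
theorem cycle_not_adj_aux (m i j : ℕ) (hij : i < j) (hj : j + 1 < m + 5)
    (hd : 2 ≤ j - i) (hd2 : j - i ≤ m + 3) :
    ¬ (SimpleGraph.cycleGraph (m + 5)).Adj ⟨i, by omega⟩ ⟨j, by omega⟩ := by
  intro hadj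
  rw [SimpleGraph.cycleGraph_adj'] at hadj
  simp only [Fin.sub_def] at hadj
  have h1 : (m + 5 - j + i) % (m + 5) = m + 5 - j + i := by
    rw [Nat.mod_eq_of_lt]; omega
  have h2 : (m + 5 - i + j) % (m + 5) = j - i := by
    rw [show m + 5 - i + j = (m + 5) + (j - i) by omega, Nat.add_mod_left, Nat.mod_eq_of_lt]
    omega
  omega

theorem cycle_adj_aux (m i : ℕ) (hi : i + 2 < m + 5) :
    (SimpleGraph.cycleGraph (m + 5)).Adj ⟨i, by omega⟩ ⟨i + 1, by omega⟩ := by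
  rw [SimpleGraph.cycleGraph_adj']
  simp only [Fin.sub_def]
  right
  rw [show m + 5 - i + (i + 1) = (m + 5) + 1 by omega, Nat.add_mod_left, Nat.mod_eq_of_lt]
  omega

/-- If a graph satisfies: whenever `x ~≃ y ~≃ z ~≃ t` then `x ~≃ z` or `y ~≃ t`
(where `a ~≃ b` means `a = b` or `a` adjacent `b`), then it has no induced cycle
of odd length at least five. -/
theorem no_induced_odd_cycle {V : Type*} (Γ : SimpleGraph V)
    (h : ∀ x y z t : V, (x = y ∨ Γ.Adj x y) → (y = z ∨ Γ.Adj y z) → (z = t ∨ Γ.Adj z t) →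
      (x = z ∨ Γ.Adj x z) ∨ (y = t ∨ Γ.Adj y t)) :
    ∀ n : ℕ, 5 ≤ n → Odd n → IsEmpty (SimpleGraph.cycleGraph n ↪g Γ) := by
  intro n hn _
  obtain ⟨m, rfl⟩ : ∃ m, n = m + 5 := ⟨n - 5, by omega⟩
  constructor
  intro f
  have hab := cycle_adj_aux m 0 (by omega)
  have hbc := cycle_adj_aux m 1 (by omega)
  have hcd := cycle_adj_aux m 2 (by omega)
  have hac := cycle_not_adj_aux m 0 2 (by omega) (by omega) (by omega) (by omega)
  have hbd := cycle_not_adj_aux m 1 3 (by omega) (by omega) (by omega) (by omega)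
  have hac' : (⟨0, by omega⟩ : Fin (m + 5)) ≠ ⟨2, by omega⟩ := by
    simp [Fin.ext_iff]
  have hbd' : (⟨1, by omega⟩ : Fin (m + 5)) ≠ ⟨3, by omega⟩ := by
    simp [Fin.ext_iff]
  rcases h (f ⟨0, by omega⟩) (f ⟨1, by omega⟩) (f ⟨2, by omega⟩) (f ⟨3, by omega⟩)
      (Or.inr (f.map_adj_iff.2 hab)) (Or.inr (f.map_adj_iff.2 hbc))
      (Or.inr (f.map_adj_iff.2 hcd)) with (hh | hh) | (hh | hh)
  · exact hac' (f.injective hh)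
  · exact hac (f.map_adj_iff.1 hh)
  · exact hbd' (f.injective hh)
  · exact hbd (f.map_adj_iff.1 hh)
end

section
/- Let p be a prime and G a group. For any elements x, y, z, t of G all of whose orders are powers of p, if x, y are adjacent or equal, y, z are adjacent or equal, and z, t are adjacent or equal in the enhanced power graph, then x, z are adjacent or equal, or y, t are adjacent or equal in the enhanced power graph. -/
/-!
If two elements of `p`-power order lie in a common cyclic subgroup `⟨c⟩`, the one of smaller
order is a power of the other, since `⟨c⟩` has at most one subgroup of each finite order. So on
such elements "adjacent or equal" means "one is a power of the other". Given the chain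
`x — y — z — t`, either `y ∈ ⟨z⟩` and then `y` and `t` both lie in `⟨z⟩` or both in `⟨t⟩`, or
`z ∈ ⟨y⟩` and then `x` and `z` both lie in `⟨x⟩` or both in `⟨y⟩`.
-/

open Subgroup

section

variable {G : Type*} [Group G]

theorem eq_or_enhancedPowerGraph_adj_iff {x y : G} :
    x = y ∨ (enhancedPowerGraph G).Adj x y ↔ ∃ g : G, x ∈ zpowers g ∧ y ∈ zpowers g := by
  constructor
  · rintro (rfl | ⟨-, hxy⟩)
    · exact ⟨x, mem_zpowers x, mem_zpowers x⟩
    · exact hxy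
  · intro hxy
    by_cases h : x = y
    · exact Or.inl h
    · exact Or.inr ⟨h, hxy⟩

theorem mem_zpowers_pow_of_pow_eq_one {c x : G} {d m : ℕ} (hc : orderOf c = d * m)
    (hm : m ≠ 0) (hx : x ∈ zpowers c) (hxm : x ^ m = 1) : x ∈ zpowers (c ^ d) := by
  obtain ⟨i, rfl⟩ := mem_zpowers_iff.mp hx
  have hdvd : ((d * m : ℕ) : ℤ) ∣ i * m := by
    rw [← hc, orderOf_dvd_iff_zpow_eq_one, zpow_mul, zpow_natCast, hxm]
  obtain ⟨s, rfl⟩ : (d : ℤ) ∣ i := by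
    push_cast at hdvd
    exact (mul_dvd_mul_iff_right (Int.natCast_ne_zero.mpr hm)).mp hdvd
  exact mem_zpowers_iff.mpr ⟨s, by rw [← zpow_natCast, ← zpow_mul]⟩

theorem zpowers_eq_of_mem_zpowers_of_orderOf_eq {b e : G} (hb : b ∈ zpowers e)
    (he : orderOf e ≠ 0) (hbe : orderOf b = orderOf e) : zpowers b = zpowers e := by
  have : Finite (zpowers e) :=
    (orderOf_ne_zero_iff.mp he).finite_zpowers.to_subtype
  exact eq_of_le_of_card_ge (zpowers_le.mpr hb) (by rw [Nat.card_zpowers, Nat.card_zpowers, hbe])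

theorem mem_zpowers_of_orderOf_dvd_s7 {a b c : G} (hb0 : orderOf b ≠ 0) (ha : a ∈ zpowers c)
    (hb : b ∈ zpowers c) (hab : orderOf a ∣ orderOf b) : a ∈ zpowers b := by
  set m := orderOf b
  have hc : orderOf c = orderOf c / m * m :=
    (Nat.div_mul_cancel (orderOf_dvd_of_mem_zpowers hb)).symm
  set e := c ^ (orderOf c / m)
  have hbe : b ∈ zpowers e := mem_zpowers_pow_of_pow_eq_one hc hb0 hb (pow_orderOf_eq_one b)
  have hae : a ∈ zpowers e :=
    mem_zpowers_pow_of_pow_eq_one hc hb0 ha (orderOf_dvd_iff_pow_eq_one.mp hab)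
  have he : orderOf e = m := Nat.dvd_antisymm
    (orderOf_dvd_of_pow_eq_one (by rw [← pow_mul, ← hc, pow_orderOf_eq_one]))
    (orderOf_dvd_of_mem_zpowers hbe)
  rwa [zpowers_eq_of_mem_zpowers_of_orderOf_eq hbe (he ▸ hb0) he.symm]

theorem eq_or_enhancedPowerGraph_adj_iff_of_orderOf_eq_pow {p : ℕ} (hp : p ≠ 0) {x y : G}
    (hx : ∃ k : ℕ, orderOf x = p ^ k) (hy : ∃ k : ℕ, orderOf y = p ^ k) :
    x = y ∨ (enhancedPowerGraph G).Adj x y ↔ x ∈ zpowers y ∨ y ∈ zpowers x := by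
  obtain ⟨k, hk⟩ := hx
  obtain ⟨l, hl⟩ := hy
  rw [eq_or_enhancedPowerGraph_adj_iff]
  constructor
  · rintro ⟨g, hxg, hyg⟩
    rcases le_total k l with hkl | hlk
    · exact Or.inl (mem_zpowers_of_orderOf_dvd_s7 (hl ▸ pow_ne_zero l hp) hxg hyg
        (hk ▸ hl ▸ pow_dvd_pow p hkl))
    · exact Or.inr (mem_zpowers_of_orderOf_dvd_s7 (hk ▸ pow_ne_zero k hp) hyg hxg
        (hk ▸ hl ▸ pow_dvd_pow p hlk))
  · rintro (hxy | hyx)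
    · exact ⟨y, hxy, mem_zpowers y⟩
    · exact ⟨x, mem_zpowers x, hyx⟩

theorem exists_mem_zpowers_of_mem_zpowers {a b c : G} (hab : a ∈ zpowers b)
    (hbc : b ∈ zpowers c ∨ c ∈ zpowers b) : ∃ g : G, a ∈ zpowers g ∧ c ∈ zpowers g := by
  rcases hbc with hbc | hcb
  · exact ⟨c, zpowers_le.mpr hbc hab, mem_zpowers c⟩
  · exact ⟨b, hab, hcb⟩

end

/-- For elements of `p`-power order, a path of length 3 in the enhanced power graph
(allowing equalities) forces a chord. -/
theorem enhanced_adj_of_chain_of_prime_pow {G : Type*} [Group G] {p : ℕ} (hp : p.Prime)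
    {x y z t : G} (hx : ∃ k : ℕ, orderOf x = p ^ k) (hy : ∃ k : ℕ, orderOf y = p ^ k)
    (hz : ∃ k : ℕ, orderOf z = p ^ k) (ht : ∃ k : ℕ, orderOf t = p ^ k)
    (hxy : x = y ∨ (enhancedPowerGraph G).Adj x y)
    (hyz : y = z ∨ (enhancedPowerGraph G).Adj y z)
    (hzt : z = t ∨ (enhancedPowerGraph G).Adj z t) :
    (x = z ∨ (enhancedPowerGraph G).Adj x z) ∨ (y = t ∨ (enhancedPowerGraph G).Adj y t) := by
  have hxy := (eq_or_enhancedPowerGraph_adj_iff_of_orderOf_eq_pow hp.ne_zero hx hy).mp hxy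
  have hyz := (eq_or_enhancedPowerGraph_adj_iff_of_orderOf_eq_pow hp.ne_zero hy hz).mp hyz
  have hzt := (eq_or_enhancedPowerGraph_adj_iff_of_orderOf_eq_pow hp.ne_zero hz ht).mp hzt
  rw [eq_or_enhancedPowerGraph_adj_iff, eq_or_enhancedPowerGraph_adj_iff]
  rcases hyz with hyz | hzy
  · exact Or.inr (exists_mem_zpowers_of_mem_zpowers hyz hzt)
  · obtain ⟨g, hzg, hxg⟩ := exists_mem_zpowers_of_mem_zpowers hzy hxy.symm
    exact Or.inl ⟨g, hxg, hzg⟩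
end

section
/- Let Γ₁ and Γ₂ be finite graphs, each with the property that whenever x ~≃ y ~≃ z ~≃ t, then x ~≃ z or y ~≃ t (where a ~≃ b means a = b or a adjacent to b). Then the strong product Γ₁ ⊠ Γ₂ is a Berge graph, i.e., neither the product nor its complement contains an induced cycle of odd length at least 5. -/
/-- The strong product of two simple graphs. -/
def strongProd {α β : Type*} (G : SimpleGraph α) (H : SimpleGraph β) :
    SimpleGraph (α × β) where
  Adj x y := x ≠ y ∧ (x.1 = y.1 ∨ G.Adj x.1 y.1) ∧ (x.2 = y.2 ∨ H.Adj x.2 y.2)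
  symm := ⟨fun _ _ ⟨h, h1, h2⟩ => ⟨h.symm, h1.imp Eq.symm (fun a => G.adj_symm a), h2.imp Eq.symm (fun a => H.adj_symm a)⟩⟩
  loopless := ⟨fun _ ⟨h, _⟩ => h rfl⟩

/-- A Berge graph: neither the graph nor its complement contains an induced
odd cycle of length at least five. -/
def IsBerge {V : Type*} (Γ : SimpleGraph V) : Prop :=
  ∀ n : ℕ, 5 ≤ n → Odd n →
    IsEmpty (SimpleGraph.cycleGraph n ↪g Γ) ∧ IsEmpty (SimpleGraph.cycleGraph n ↪g Γᶜ)

/-!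
Write `x ≃ y` for "`x = y` or `x ~ y`"; in the strong product, `x ≃ y` holds exactly when it holds
in both coordinates. Around an induced odd hole `v₀ v₁ … v_{n-1}`, the chain condition applied to
`vᵢ ≃ vᵢ₊₁ ≃ vᵢ₊₂ ≃ vᵢ₊₃` in each coordinate says that every coordinate relates `vᵢ, vᵢ₊₂` or
`vᵢ₊₁, vᵢ₊₃`, while no `vᵢ, vᵢ₊₂` are related in both coordinates. Hence "the first coordinate
relates `vᵢ, vᵢ₊₂`" alternates with `i`, which is impossible around a cycle of odd length. In an odd
antihole the same argument runs on the pairs `vᵢ, vᵢ₊₁` along the chain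
`vᵢ₊₂ ≃ vᵢ ≃ vᵢ₊₃ ≃ vᵢ₊₁`, stepping by two.
-/

open scoped Fin.NatCast

theorem false_of_forall_or_add_of_odd {M : Type*} [AddMonoid M] {n : ℕ} (hn : Odd n) {d : M}
    (hd : n • d = 0) {P Q : M → Prop} (hPQ : ∀ i, ¬ (P i ∧ Q i))
    (hP : ∀ i, P i ∨ P (i + d)) (hQ : ∀ i, Q i ∨ Q (i + d)) : False := by
  have step : ∀ i, P (i + d) ↔ ¬ P i := fun i =>
    ⟨fun hPd hPi => hPQ (i + d) ⟨hPd, (hQ i).resolve_left fun hQi => hPQ i ⟨hPi, hQi⟩⟩,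
      (hP i).resolve_left⟩
  have alternate : ∀ i (k : ℕ), P (i + k • d) ↔ (P i ↔ Even k) := by
    intro i k
    induction k with
    | zero => simp
    | succ k ih => rw [succ_nsmul, ← add_assoc, step, ih, Nat.even_add_one]; tauto
  have h := alternate 0 n
  rw [hd, add_zero] at h
  have := Nat.not_even_iff_odd.2 hn
  tauto

namespace SimpleGraph

variable {V α β : Type*}

def AdjOrEq (G : SimpleGraph V) (x y : V) : Prop := x = y ∨ G.Adj x y

def ChainCondition (G : SimpleGraph V) : Prop :=
  ∀ ⦃x y z t : V⦄, G.AdjOrEq x y → G.AdjOrEq y z → G.AdjOrEq z t →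
    G.AdjOrEq x z ∨ G.AdjOrEq y t

lemma AdjOrEq.symm {G : SimpleGraph V} {x y : V} (h : G.AdjOrEq x y) : G.AdjOrEq y x :=
  h.imp Eq.symm fun h => h.symm

lemma adjOrEq_iff_not_compl_adj {G : SimpleGraph V} {x y : V} : G.AdjOrEq x y ↔ ¬ Gᶜ.Adj x y := by
  rw [AdjOrEq, compl_adj]
  tauto

lemma Embedding.adjOrEq_iff {G : SimpleGraph α} {H : SimpleGraph β} (f : G ↪g H) {x y : α} :
    H.AdjOrEq (f x) (f y) ↔ G.AdjOrEq x y := by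
  rw [AdjOrEq, AdjOrEq, f.injective.eq_iff, f.map_adj_iff]

lemma adjOrEq_strongProd_iff {G : SimpleGraph α} {H : SimpleGraph β} {x y : α × β} :
    (strongProd G H).AdjOrEq x y ↔ G.AdjOrEq x.1 y.1 ∧ H.AdjOrEq x.2 y.2 := by
  by_cases hxy : x = y
  · subst hxy
    exact iff_of_true (Or.inl rfl) ⟨Or.inl rfl, Or.inl rfl⟩
  · simp only [AdjOrEq, hxy, false_or]
    exact ⟨fun h => h.2, fun h => ⟨hxy, h⟩⟩

lemma cycleGraph_adj_add_one {n : ℕ} [NeZero n] (hn : 2 ≤ n) (i : Fin n) :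
    (cycleGraph n).Adj i (i + 1) := by
  rw [cycleGraph_adj', add_sub_cancel_left, Fin.val_one']
  exact Or.inr (Nat.mod_eq_of_lt hn)

lemma cycleGraph_not_adjOrEq_add {n : ℕ} [NeZero n] (i : Fin n) {k : ℕ} (hk : 2 ≤ k)
    (hkn : k + 2 ≤ n) : ¬ (cycleGraph n).AdjOrEq i (i + k) := by
  have hk0 : (k : Fin n) ≠ 0 := by
    rw [Ne, Fin.natCast_eq_zero]
    exact Nat.not_dvd_of_pos_of_lt (by omega) (by omega)
  rw [AdjOrEq, cycleGraph_adj', sub_add_cancel_left, add_sub_cancel_left, left_eq_add,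
    Fin.val_neg, if_neg hk0, Fin.val_natCast, Nat.mod_eq_of_lt (by omega)]
  omega

namespace ChainCondition

variable {G : SimpleGraph α} {H : SimpleGraph β} {M : Type*} [AddCommMonoid M] {d : M}

lemma adjOrEq_two_nsmul_or (hG : G.ChainCondition) {v : M → α}
    (hv : ∀ i, G.AdjOrEq (v i) (v (i + d))) (i : M) :
    G.AdjOrEq (v i) (v (i + 2 • d)) ∨ G.AdjOrEq (v (i + d)) (v (i + d + 2 • d)) := by
  have h := hG (hv i) (hv (i + d)) (hv (i + d + d))
  rwa [show i + d + d + d = i + d + 2 • d by abel, show i + d + d = i + 2 • d by abel] at h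

lemma adjOrEq_add_or (hG : G.ChainCondition) {v : M → α}
    (hv₂ : ∀ i, G.AdjOrEq (v i) (v (i + 2 • d))) (hv₃ : ∀ i, G.AdjOrEq (v i) (v (i + 3 • d)))
    (i : M) : G.AdjOrEq (v i) (v (i + d)) ∨ G.AdjOrEq (v (i + 2 • d)) (v (i + 2 • d + d)) := by
  have h₃ := (hv₂ (i + d)).symm
  rw [show i + d + 2 • d = i + 3 • d by abel] at h₃
  rw [show i + 2 • d + d = i + 3 • d by abel]
  exact (hG (hv₂ i).symm (hv₃ i) h₃).symm

variable {n : ℕ}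

theorem false_of_strongProd_hole (hG : G.ChainCondition) (hH : H.ChainCondition)
    (hn : Odd n) (hd : n • d = 0) (u : M → α × β)
    (hadj : ∀ i, (strongProd G H).AdjOrEq (u i) (u (i + d)))
    (hnon : ∀ i, ¬ (strongProd G H).AdjOrEq (u i) (u (i + 2 • d))) : False := by
  simp only [adjOrEq_strongProd_iff] at hadj hnon
  exact false_of_forall_or_add_of_odd hn hd hnon
    (hG.adjOrEq_two_nsmul_or fun i => (hadj i).1) (hH.adjOrEq_two_nsmul_or fun i => (hadj i).2)

theorem false_of_strongProd_antihole (hG : G.ChainCondition) (hH : H.ChainCondition)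
    (hn : Odd n) (hd : n • d = 0) (u : M → α × β)
    (hnon : ∀ i, ¬ (strongProd G H).AdjOrEq (u i) (u (i + d)))
    (hadj₂ : ∀ i, (strongProd G H).AdjOrEq (u i) (u (i + 2 • d)))
    (hadj₃ : ∀ i, (strongProd G H).AdjOrEq (u i) (u (i + 3 • d))) : False := by
  simp only [adjOrEq_strongProd_iff] at hnon hadj₂ hadj₃
  have hd₂ : n • (2 • d) = 0 := by rw [smul_comm, hd, smul_zero]
  exact false_of_forall_or_add_of_odd hn hd₂ hnon
    (hG.adjOrEq_add_or (fun i => (hadj₂ i).1) fun i => (hadj₃ i).1)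
    (hH.adjOrEq_add_or (fun i => (hadj₂ i).2) fun i => (hadj₃ i).2)

end ChainCondition

end SimpleGraph

open SimpleGraph in
theorem strongProd_isBerge_general {α β : Type*}
    (Γ₁ : SimpleGraph α) (Γ₂ : SimpleGraph β)
    (h₁ : ∀ x y z t : α, (x = y ∨ Γ₁.Adj x y) → (y = z ∨ Γ₁.Adj y z) → (z = t ∨ Γ₁.Adj z t) →
      (x = z ∨ Γ₁.Adj x z) ∨ (y = t ∨ Γ₁.Adj y t))
    (h₂ : ∀ x y z t : β, (x = y ∨ Γ₂.Adj x y) → (y = z ∨ Γ₂.Adj y z) → (z = t ∨ Γ₂.Adj z t) →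
      (x = z ∨ Γ₂.Adj x z) ∨ (y = t ∨ Γ₂.Adj y t)) :
    IsBerge (strongProd Γ₁ Γ₂) := by
  have hΓ₁ : Γ₁.ChainCondition := fun x y z t => h₁ x y z t
  have hΓ₂ : Γ₂.ChainCondition := fun x y z t => h₂ x y z t
  intro n hn hodd
  have : NeZero n := ⟨by omega⟩
  have hd : n • (1 : Fin n) = 0 := by simp
  have far (i : Fin n) (k : ℕ) (hk : 2 ≤ k) (hkn : k + 2 ≤ n) :
      ¬ (cycleGraph n).AdjOrEq i (i + k • 1) := by
    rw [nsmul_one]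
    exact cycleGraph_not_adjOrEq_add i hk hkn
  refine ⟨⟨fun e => ?_⟩, ⟨fun e => ?_⟩⟩
  · refine hΓ₁.false_of_strongProd_hole hΓ₂ hodd hd e (fun i => ?_) (fun i => ?_) <;>
      rw [e.adjOrEq_iff]
    · exact Or.inr (cycleGraph_adj_add_one (by omega) i)
    · exact far i 2 le_rfl (by omega)
  · refine hΓ₁.false_of_strongProd_antihole hΓ₂ hodd hd e (fun i => ?_) (fun i => ?_)
      (fun i => ?_) <;> rw [adjOrEq_iff_not_compl_adj, e.map_adj_iff]
    · exact not_not.2 (cycleGraph_adj_add_one (by omega) i)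
    · exact fun h => far i 2 le_rfl (by omega) (Or.inr h)
    · exact fun h => far i 3 (by omega) (by omega) (Or.inr h)

/-- The strong product of two finite graphs with the chain condition is a Berge graph. -/
theorem strongProd_isBerge {α β : Type*} [Fintype α] [Fintype β]
    (Γ₁ : SimpleGraph α) (Γ₂ : SimpleGraph β)
    (h₁ : ∀ x y z t : α, (x = y ∨ Γ₁.Adj x y) → (y = z ∨ Γ₁.Adj y z) → (z = t ∨ Γ₁.Adj z t) →
      (x = z ∨ Γ₁.Adj x z) ∨ (y = t ∨ Γ₁.Adj y t))
    (h₂ : ∀ x y z t : β, (x = y ∨ Γ₂.Adj x y) → (y = z ∨ Γ₂.Adj y z) → (z = t ∨ Γ₂.Adj z t) →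
      (x = z ∨ Γ₂.Adj x z) ∨ (y = t ∨ Γ₂.Adj y t)) :
    IsBerge (strongProd Γ₁ Γ₂) :=
  strongProd_isBerge_general Γ₁ Γ₂ h₁ h₂
end

section
/- Let G be a finite group of prime power order. Then the enhanced power graph of G is perfect. -/
/-- A graph is perfect if every induced subgraph has chromatic number equal to
its clique number. -/
def SimpleGraph.IsPerfect {V : Type*} (G : SimpleGraph V) : Prop :=
  ∀ s : Set V, (G.induce s).chromaticNumber = ((G.induce s).cliqueNum : ℕ∞)

/-!
In a `p`-group the subgroups of a cyclic subgroup form a chain, so two elements generate a cyclic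
subgroup iff one is a power of the other: the enhanced power graph is the comparability graph of
`x ↦ zpowers x`. Breaking ties between generators of the same cyclic subgroup turns this into the
comparability graph of a partial order, and such graphs are perfect: colouring a vertex by its
height uses as many colours as the longest chain has elements, and a chain is a clique.
-/

open Subgroup

theorem IsCyclic.le_of_card_dvd {α : Type*} [Group α] [Finite α] [IsCyclic α]
    {H K : Subgroup α} (h : Nat.card H ∣ Nat.card K) : H ≤ K := by
  classical
  have := Fintype.ofFinite α
  -- A cyclic group has at most `n` solutions of `a ^ n = 1`, so `K` consists of all of them.
  have hK : (K : Set α).toFinset = ({a | a ^ Nat.card K = 1} : Finset α) := by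
    refine Finset.eq_of_subset_of_card_le (fun a ha => ?_) ?_
    · rw [Set.mem_toFinset] at ha
      simpa only [Finset.mem_filter, Finset.mem_univ, true_and] using
        orderOf_dvd_iff_pow_eq_one.mp (K.orderOf_dvd_natCard ha)
    · rw [Set.toFinset_card, ← Nat.card_eq_fintype_card]
      exact IsCyclic.card_pow_eq_one_le Nat.card_pos
  intro x hx
  have hxK : x ^ Nat.card K = 1 :=
    orderOf_dvd_iff_pow_eq_one.mp ((H.orderOf_dvd_natCard hx).trans h)
  have : x ∈ (K : Set α).toFinset := by
    rw [hK]; simpa only [Finset.mem_filter, Finset.mem_univ, true_and] using hxK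
  simpa using this

theorem IsPGroup.le_total_of_isCyclic {p : ℕ} [Fact p.Prime] {α : Type*} [Group α] [Finite α]
    [IsCyclic α] (hα : IsPGroup p α) (H K : Subgroup α) : H ≤ K ∨ K ≤ H := by
  obtain ⟨a, ha⟩ := IsPGroup.iff_card.mp (hα.to_subgroup H)
  obtain ⟨b, hb⟩ := IsPGroup.iff_card.mp (hα.to_subgroup K)
  rcases le_total a b with hab | hab
  · exact Or.inl (IsCyclic.le_of_card_dvd (by rw [ha, hb]; exact Nat.pow_dvd_pow p hab))
  · exact Or.inr (IsCyclic.le_of_card_dvd (by rw [ha, hb]; exact Nat.pow_dvd_pow p hab))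

theorem IsPGroup.zpowers_le_total_of_mem_zpowers {p : ℕ} [hp : Fact p.Prime] {G : Type*} [Group G]
    (hG : IsPGroup p G) {x y z : G} (hx : x ∈ zpowers z) (hy : y ∈ zpowers z) :
    zpowers x ≤ zpowers y ∨ zpowers y ≤ zpowers x := by
  have : Finite (zpowers z) := (hG.isOfFinOrder hp.out.ne_zero z).finite_zpowers.to_subtype
  have hmap : ∀ w (hw : w ∈ zpowers z),
      (zpowers (⟨w, hw⟩ : zpowers z)).map (zpowers z).subtype = zpowers w :=
    fun _ _ => MonoidHom.map_zpowers _ _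
  rw [← hmap x hx, ← hmap y hy]
  exact ((hG.to_subgroup _).le_total_of_isCyclic _ _).imp (map_mono ·) (map_mono ·)

theorem enhancedPowerGraph_adj_iff_of_isPGroup {p : ℕ} [Fact p.Prime] {G : Type*} [Group G]
    (hG : IsPGroup p G) {x y : G} :
    (enhancedPowerGraph G).Adj x y ↔
      x ≠ y ∧ (zpowers x ≤ zpowers y ∨ zpowers y ≤ zpowers x) := by
  refine and_congr_right fun _ =>
    ⟨fun ⟨_, hx, hy⟩ => hG.zpowers_le_total_of_mem_zpowers hx hy, ?_⟩
  rintro (h | h)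
  · exact ⟨y, h (mem_zpowers x), mem_zpowers y⟩
  · exact ⟨x, mem_zpowers x, h (mem_zpowers y)⟩

theorem Order.natCast_toNat_height {α : Type*} [Preorder α] [Finite α] (x : α) :
    ((Order.height x).toNat : ℕ∞) = Order.height x := by
  have := Fintype.ofFinite α
  refine ENat.natCast_toNat (ne_top_of_le_ne_top (ENat.natCast_ne_top (Fintype.card α)) ?_)
  exact Order.height_le fun s _ => Nat.cast_le.mpr s.length_lt_card.le

namespace SimpleGraph
open Order

section PartialOrder

variable {V : Type*} [PartialOrder V] {G : SimpleGraph V}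

theorem isClique_range_of_adj_iff_lt_or_gt (hG : ∀ x y, G.Adj x y ↔ x < y ∨ y < x)
    (s : LTSeries V) : G.IsClique (Set.range s) := by
  rintro _ ⟨i, rfl⟩ _ ⟨j, rfl⟩ hij
  exact (hG _ _).mpr
    ((lt_or_gt_of_ne (ne_of_apply_ne s hij)).imp (s.strictMono ·) (s.strictMono ·))

variable [Finite V]

theorem height_toNat_lt_cliqueNum (hG : ∀ x y, G.Adj x y ↔ x < y ∨ y < x) (x : V) :
    (height x).toNat < G.cliqueNum := by
  classical
  obtain ⟨s, -, hs⟩ := exists_series_of_height_eq_coe x (natCast_toNat_height x).symm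
  have := IsClique.card_le_cliqueNum (G := G) (t := Finset.univ.map ⟨s, s.strictMono.injective⟩)
    (tc := by simpa using isClique_range_of_adj_iff_lt_or_gt hG s)
  simp only [Finset.card_map, Finset.card_univ, Fintype.card_fin] at this
  omega

theorem chromaticNumber_eq_cliqueNum_of_adj_iff_lt_or_gt
    (hG : ∀ x y, G.Adj x y ↔ x < y ∨ y < x) : G.chromaticNumber = G.cliqueNum := by
  have hmono : StrictMono fun x : V => (height x).toNat := fun x y hxy => by
    have := height_strictMono hxy ((natCast_toNat_height x) ▸ ENat.natCast_lt_top _)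
    rwa [← natCast_toNat_height x, ← natCast_toNat_height y, Nat.cast_lt] at this
  let c : G.Coloring (Fin G.cliqueNum) :=
    Coloring.mk (fun x => ⟨_, height_toNat_lt_cliqueNum hG x⟩) fun hxy h => by
      rcases (hG _ _).mp hxy with hlt | hlt
      · exact (hmono hlt).ne (Fin.val_eq_of_eq h)
      · exact (hmono hlt).ne (Fin.val_eq_of_eq h).symm
  exact le_antisymm (by simpa using c.colorable.chromaticNumber_le) cliqueNum_le_chromaticNumber

theorem isPerfect_of_adj_iff_lt_or_gt (hG : ∀ x y, G.Adj x y ↔ x < y ∨ y < x) : G.IsPerfect :=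
  fun _ => chromaticNumber_eq_cliqueNum_of_adj_iff_lt_or_gt fun _ _ => hG _ _

end PartialOrder

theorem isPerfect_of_adj_iff_le_or_ge {V P : Type*} [Finite V] [PartialOrder P]
    {G : SimpleGraph V} (f : V → P)
    (hG : ∀ x y, G.Adj x y ↔ x ≠ y ∧ (f x ≤ f y ∨ f y ≤ f x)) :
    G.IsPerfect := by
  -- Ties of `f` are broken by an enumeration `e`, which leaves comparability unchanged.
  let e := Finite.equivFin V
  let _ : PartialOrder V := PartialOrder.lift (fun x => toLex (f x, e x))
    fun x y h => e.injective (congrArg (fun q => (ofLex q).2) h)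
  refine isPerfect_of_adj_iff_lt_or_gt fun x y => ?_
  change _ ↔ toLex (f x, e x) < toLex (f y, e y) ∨ toLex (f y, e y) < toLex (f x, e x)
  simp only [hG, Prod.Lex.toLex_lt_toLex']
  grind [le_antisymm, Equiv.apply_eq_iff_eq]

end SimpleGraph

/-- Every finite group of prime power order has a perfect enhanced power graph. -/
theorem enhanced_isPerfect_of_prime_pow_card {G : Type*} [Group G] [Fintype G]
    {p n : ℕ} (hp : p.Prime) (hcard : Fintype.card G = p ^ n) :
    (enhancedPowerGraph G).IsPerfect := by
  have : Fact p.Prime := ⟨hp⟩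
  have hG : IsPGroup p G := IsPGroup.of_card (Nat.card_eq_fintype_card.trans hcard)
  exact SimpleGraph.isPerfect_of_adj_iff_le_or_ge zpowers fun _ _ =>
    enhancedPowerGraph_adj_iff_of_isPGroup hG
end

section
/- The enhanced power graph of the alternating group A₅ is a perfect graph, although A₅ has no unique Sylow subgroup. -/
open Finset Subgroup

namespace Finset

variable {β : Type*} [LinearOrder β] (s : Finset β)

lemma card_filter_lt_lt_card {x : β} (hx : x ∈ s) : #{y ∈ s | y < x} < #s :=
  card_lt_card (filter_ssubset.2 ⟨x, hx, lt_irrefl x⟩)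

lemma strictMonoOn_card_filter_lt : StrictMonoOn (fun x => #{y ∈ s | y < x}) s := by
  intro u hu v _ huv
  refine card_lt_card ⟨monotone_filter_right s fun _ _ hy => hy.trans huv, fun h => ?_⟩
  exact lt_irrefl u (mem_filter.1 (h (mem_filter.2 ⟨hu, huv⟩))).2

end Finset

namespace SimpleGraph

variable {W α : Type*} {H : SimpleGraph W} {A : Set W} {c : W → α}

lemma card_le_cliqueNum_of_forall_eq [Finite W]
    (hadj : ∀ x y, H.Adj x y ↔ x ≠ y ∧ (x ∈ A ∨ y ∈ A ∨ c x = c y))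
    {t : Finset W} {a : α} (ht : ∀ x ∈ t, c x = a) : #t ≤ H.cliqueNum :=
  IsClique.card_le_cliqueNum (tc := fun x hx y hy hxy =>
    (hadj x y).2 ⟨hxy, .inr (.inr ((ht x hx).trans (ht y hy).symm))⟩)

lemma card_lt_cliqueNum_of_forall_eq [Finite W]
    (hadj : ∀ x y, H.Adj x y ↔ x ≠ y ∧ (x ∈ A ∨ y ∈ A ∨ c x = c y))
    {t : Finset W} {a : α} (ht : ∀ x ∈ t, c x = a) {v : W} (hv : v ∈ A) (hvt : v ∉ t) :
    #t < H.cliqueNum := by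
  classical
  have hclique : H.IsClique (insert v t : Finset W) := by
    rw [coe_insert, isClique_insert]
    refine ⟨fun x hx y hy hxy => (hadj x y).2 ⟨hxy, .inr (.inr ?_)⟩,
      fun y _ hvy => (hadj v y).2 ⟨hvy, .inl hv⟩⟩
    exact (ht x hx).trans (ht y hy).symm
  have := hclique.card_le_cliqueNum
  rwa [card_insert_of_notMem hvt, Nat.add_one_le_iff] at this

theorem colorable_cliqueNum_of_adj_iff [Finite W] (hA : A.Subsingleton)
    (hadj : ∀ x y, H.Adj x y ↔ x ≠ y ∧ (x ∈ A ∨ y ∈ A ∨ c x = c y)) :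
    H.Colorable H.cliqueNum := by
  classical
  have := Fintype.ofFinite W
  let : LinearOrder W := LinearOrder.lift' _ (Fintype.equivFin W).injective
  let fiber (x : W) : Finset W := {y | y ∉ A ∧ c y = c x}
  have mem_fiber {x : W} (hx : x ∉ A) : x ∈ fiber x := by simp [fiber, hx]
  have fiber_const (x : W) : ∀ y ∈ fiber x, c y = c x := by simp [fiber]
  have notMem_fiber {v : W} (hv : v ∈ A) (x : W) : v ∉ fiber x := by simp [fiber, hv]
  let color (x : W) : ℕ := if x ∈ A then H.cliqueNum - 1 else #{y ∈ fiber x | y < x}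
  have color_lt_of_mem {x v : W} (hx : x ∉ A) (hv : v ∈ A) : color x < color v := by
    have := card_lt_cliqueNum_of_forall_eq hadj (fiber_const x) hv (notMem_fiber hv x)
    have := card_filter_lt_lt_card _ (mem_fiber hx)
    simp only [color, if_pos hv, if_neg hx]
    omega
  have color_lt (x : W) : color x < H.cliqueNum := by
    by_cases hx : x ∈ A
    · have := card_lt_cliqueNum_of_forall_eq hadj (fiber_const x) hx (notMem_fiber hx x)
      simp only [color, if_pos hx]
      omega
    · simp only [color, if_neg hx]
      exact (card_filter_lt_lt_card _ (mem_fiber hx)).trans_le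
        (card_le_cliqueNum_of_forall_eq hadj (fiber_const x))
  refine ⟨Coloring.mk (fun x => ⟨color x, color_lt x⟩) fun {x y} hxy => ?_⟩
  obtain ⟨hne, hxy⟩ := (hadj x y).1 hxy
  rw [ne_eq, Fin.mk.injEq]
  by_cases hx : x ∈ A <;> by_cases hy : y ∈ A
  · exact absurd (hA hx hy) hne
  · exact (color_lt_of_mem hy hx).ne'
  · exact (color_lt_of_mem hx hy).ne
  · have hfiber : fiber x = fiber y := by
      simp only [fiber, hxy.resolve_left hx |>.resolve_left hy]
    simp only [color, if_neg hx, if_neg hy, hfiber]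
    exact fun h => hne ((strictMonoOn_card_filter_lt _).injOn
      (hfiber ▸ mem_fiber hx) (mem_fiber hy) h)

theorem chromaticNumber_eq_cliqueNum_of_adj_iff [Finite W] (hA : A.Subsingleton)
    (hadj : ∀ x y, H.Adj x y ↔ x ≠ y ∧ (x ∈ A ∨ y ∈ A ∨ c x = c y)) :
    H.chromaticNumber = H.cliqueNum :=
  le_antisymm (colorable_cliqueNum_of_adj_iff hA hadj).chromaticNumber_le
    cliqueNum_le_chromaticNumber

end SimpleGraph

section PrimeOrder

variable {G : Type*} [Group G]

lemma zpowers_eq_of_mem_zpowers {x z : G} (hz : (orderOf z).Prime) (hx : x ≠ 1)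
    (h : x ∈ zpowers z) : zpowers x = zpowers z := by
  have : Finite (zpowers z) :=
    Nat.finite_of_card_ne_zero (by rw [Nat.card_zpowers]; exact hz.ne_zero)
  refine eq_of_le_of_card_ge (zpowers_le.2 h) ?_
  rw [Nat.card_zpowers, Nat.card_zpowers]
  rcases hz.eq_one_or_self_of_dvd _ (orderOf_dvd_of_mem_zpowers h) with h1 | h
  · exact absurd (orderOf_eq_one_iff.1 h1) hx
  · exact h.ge

lemma enhancedPowerGraph_adj_iff_of_orderOf_prime (hG : ∀ x : G, x ≠ 1 → (orderOf x).Prime)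
    {x y : G} :
    (enhancedPowerGraph G).Adj x y ↔ x ≠ y ∧ (x = 1 ∨ y = 1 ∨ zpowers x = zpowers y) := by
  refine ⟨fun ⟨hne, z, hxz, hyz⟩ => ⟨hne, ?_⟩, fun ⟨hne, h⟩ => ⟨hne, ?_⟩⟩
  · by_cases hx : x = 1
    · exact .inl hx
    by_cases hy : y = 1
    · exact .inr (.inl hy)
    have hz : (orderOf z).Prime := hG z fun hz => hx (by simpa [hz] using hxz)
    exact .inr (.inr ((zpowers_eq_of_mem_zpowers hz hx hxz).trans
      (zpowers_eq_of_mem_zpowers hz hy hyz).symm))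
  · rcases h with rfl | rfl | h
    · exact ⟨y, one_mem _, mem_zpowers y⟩
    · exact ⟨x, mem_zpowers x, one_mem _⟩
    · exact ⟨x, mem_zpowers x, h ▸ mem_zpowers y⟩

theorem enhancedPowerGraph_isPerfect_of_orderOf_prime [Finite G]
    (hG : ∀ x : G, x ≠ 1 → (orderOf x).Prime) : (enhancedPowerGraph G).IsPerfect := fun s =>
  SimpleGraph.chromaticNumber_eq_cliqueNum_of_adj_iff (A := {x : s | (x : G) = 1})
    (c := fun x => zpowers (x : G)) (fun _ hx _ hy => Subtype.ext (hx.trans hy.symm))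
    fun x y => by
      simp only [SimpleGraph.comap_adj, Function.Embedding.subtype_apply,
        enhancedPowerGraph_adj_iff_of_orderOf_prime hG, ne_eq, Subtype.ext_iff, Set.mem_ofPred_eq]

end PrimeOrder

lemma IsPGroup.eq_of_prime_dvd_card {G : Type*} [Group G] [Finite G] {p q : ℕ} [Fact p.Prime]
    (hG : IsPGroup p G) (hq : q.Prime) (hqG : q ∣ Nat.card G) : q = p := by
  obtain ⟨n, hn⟩ := IsPGroup.iff_card.1 hG
  rw [hn] at hqG
  exact (Nat.prime_dvd_prime_iff_eq hq Fact.out).1 (hq.dvd_of_dvd_pow hqG)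

lemma Sylow.nontrivial_of_isSimpleGroup {G : Type*} [Group G] [Finite G] [IsSimpleGroup G]
    {p : ℕ} [Fact p.Prime] (hp : p ∣ Nat.card G) (hG : ¬IsPGroup p G) :
    Nontrivial (Sylow p G) := by
  rw [← not_subsingleton_iff_nontrivial]
  intro
  let P : Sylow p G := default
  rcases IsSimpleGroup.eq_bot_or_eq_top_of_normal _ P.normal_of_subsingleton with hbot | htop
  · exact P.ne_bot_of_dvd_card hp hbot
  · have hP := P.isPGroup'
    rw [htop] at hP
    exact hG (hP.of_equiv topEquiv)

namespace alternatingGroup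

lemma card_five : Fintype.card (alternatingGroup (Fin 5)) = 60 := by
  rw [card_alternatingGroup, Fintype.card_fin]
  rfl

lemma not_isPGroup_five (p : ℕ) [Fact p.Prime] : ¬IsPGroup p (alternatingGroup (Fin 5)) := by
  intro h
  have hcard : Nat.card (alternatingGroup (Fin 5)) = 60 := by
    rw [Nat.card_eq_fintype_card, card_five]
  have h2 := h.eq_of_prime_dvd_card Nat.prime_two (by rw [hcard]; norm_num)
  have h3 := h.eq_of_prime_dvd_card Nat.prime_three (by rw [hcard]; norm_num)
  omega

set_option maxRecDepth 10000 in
lemma pow_two_or_pow_three_or_pow_five_eq_one (x : alternatingGroup (Fin 5)) :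
    x ^ 2 = 1 ∨ x ^ 3 = 1 ∨ x ^ 5 = 1 := by
  revert x
  decide

lemma orderOf_prime_five {x : alternatingGroup (Fin 5)} (hx : x ≠ 1) : (orderOf x).Prime := by
  have of_pow_eq_one {p : ℕ} (hp : p.Prime) (h : x ^ p = 1) : (orderOf x).Prime := by
    have := Fact.mk hp
    rwa [orderOf_eq_prime h hx]
  rcases pow_two_or_pow_three_or_pow_five_eq_one x with h | h | h
  exacts [of_pow_eq_one Nat.prime_two h, of_pow_eq_one Nat.prime_three h,
    of_pow_eq_one Nat.prime_five h]

end alternatingGroup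

/-- `A₅` has no unique Sylow subgroup, yet its enhanced power graph is perfect. -/
theorem enhanced_A5_isPerfect :
    (∀ p : ℕ, p.Prime → p ∣ Fintype.card (alternatingGroup (Fin 5)) →
      ∃ P Q : Sylow p (alternatingGroup (Fin 5)), P ≠ Q) ∧
    (enhancedPowerGraph (alternatingGroup (Fin 5))).IsPerfect := by
  refine ⟨fun p hp hdvd => ?_, enhancedPowerGraph_isPerfect_of_orderOf_prime
    fun _ => alternatingGroup.orderOf_prime_five⟩
  have := Fact.mk hp
  rw [← Nat.card_eq_fintype_card] at hdvd
  have := Sylow.nontrivial_of_isSimpleGroup hdvd (alternatingGroup.not_isPGroup_five p)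
  exact exists_pair_ne _
end

section
/- The enhanced power graph of the direct product C₃₀ × C₃₀ of two cyclic groups of order 30 contains an induced 5-cycle, and hence is not a perfect graph. -/
/-!
Write `(ZMod 30)²` multiplicatively and take `a₁ = (15,0)`, `a₂ = (0,15)` of order 2,
`b₁ = (10,0)`, `b₂ = (0,10)` of order 3 and `c₁ = (6,0)`, `c₂ = (0,6)` of order 5.
Consecutive elements of `a₁b₁, b₁c₂, a₂, b₂, a₁c₁` lie in a common cyclic subgroup.
Non-consecutive ones do not: the alternating form `u₁v₂ - u₂v₁` vanishes on every cyclic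
subgroup of `R²`, but not on those pairs. An induced pentagon has clique number 2 and
chromatic number 3, so the graph is not perfect.
-/

open Multiplicative SimpleGraph

namespace SimpleGraph

variable {V W : Type*} {G : SimpleGraph V} {H : SimpleGraph W}

theorem CliqueFree.cliqueNum_lt {n : ℕ} (h : G.CliqueFree n) : G.cliqueNum < n := by
  obtain ⟨s, hs⟩ := G.exists_isNClique_cliqueNum
  by_contra! hn
  exact h.mono hn s hs

theorem not_isPerfect_of_embedding {n : ℕ} (f : H ↪g G) (hH : H.CliqueFree n)
    (hχ : n ≤ H.chromaticNumber) : ¬G.IsPerfect := by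
  intro hG
  let e := f.isoInduceRange
  have hclique : (G.induce (Set.range f)).cliqueNum < n :=
    (hH.comap e.symm.toEmbedding.isContained).cliqueNum_lt
  rw [chromaticNumber_congr e, hG] at hχ
  exact absurd (Nat.cast_le.mp hχ) (not_le.mpr hclique)

theorem cliqueFree_cycleGraph_five_three : (cycleGraph 5).CliqueFree 3 := by
  simp only [CliqueFree, isNClique_iff]
  decide

theorem not_isPerfect_of_cycleGraph_five_embedding (f : cycleGraph 5 ↪g G) : ¬G.IsPerfect :=
  not_isPerfect_of_embedding f cliqueFree_cycleGraph_five_three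
    (chromaticNumber_cycleGraph_of_odd 5 (by norm_num) (by decide)).ge

end SimpleGraph

section CoCyclic

variable {G : Type*} [Group G]

def CoCyclic (x y : G) : Prop :=
  ∃ z : G, x ∈ Subgroup.zpowers z ∧ y ∈ Subgroup.zpowers z

theorem CoCyclic.symm {x y : G} (h : CoCyclic x y) : CoCyclic y x :=
  let ⟨z, hx, hy⟩ := h
  ⟨z, hy, hx⟩

theorem enhancedPowerGraph_adj {x y : G} :
    (enhancedPowerGraph G).Adj x y ↔ x ≠ y ∧ CoCyclic x y :=
  Iff.rfl

theorem enhancedPowerGraph_adj_pentagon {v : Fin 5 → G}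
    (hadj : ∀ i, CoCyclic (v i) (v (i + 1))) (hnon : ∀ i, ¬CoCyclic (v i) (v (i + 2)))
    (i k : Fin 5) : (enhancedPowerGraph G).Adj (v i) (v (i + k)) ↔ k = 1 ∨ k = 4 := by
  have h41 : ∀ i : Fin 5, i + 4 + 1 = i := by decide
  have h42 : ∀ i : Fin 5, i + 4 + 2 = i + 1 := by decide
  have h32 : ∀ i : Fin 5, i + 3 + 2 = i := by decide
  have hprev : ∀ i, CoCyclic (v (i + 4)) (v i) := fun i => by
    simpa only [h41] using hadj (i + 4)
  have hne : ∀ i, v i ≠ v (i + 1) := fun i h => hnon (i + 4) <| by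
    simpa only [h42, ← h] using hprev i
  rw [enhancedPowerGraph_adj]
  obtain rfl | rfl | rfl | rfl | rfl : k = 0 ∨ k = 1 ∨ k = 2 ∨ k = 3 ∨ k = 4 := by
    revert k; decide
  · simp
  · exact iff_of_true ⟨hne i, hadj i⟩ (by decide)
  · exact iff_of_false (fun h => hnon i h.2) (by decide)
  · exact iff_of_false (fun h => hnon (i + 3) (by simpa only [h32] using h.2.symm)) (by decide)
  · refine iff_of_true ⟨fun h => hne (i + 4) ?_, (hprev i).symm⟩ (by decide)
    rw [h41, h]

def pentagonEmbedding (v : Fin 5 → G) (hadj : ∀ i, CoCyclic (v i) (v (i + 1)))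
    (hnon : ∀ i, ¬CoCyclic (v i) (v (i + 2))) : cycleGraph 5 ↪g enhancedPowerGraph G := by
  have hadj_iff : ∀ i j, (enhancedPowerGraph G).Adj (v i) (v j) ↔ (cycleGraph 5).Adj i j := by
    intro i j
    rw [← add_sub_cancel i j, enhancedPowerGraph_adj_pentagon hadj hnon]
    generalize j - i = k
    revert i k
    decide
  refine ⟨⟨v, fun i j h => ?_⟩, hadj_iff _ _⟩
  have hnbr : ∀ k, (cycleGraph 5).Adj i k ↔ (cycleGraph 5).Adj j k := fun k => by
    rw [← hadj_iff, ← hadj_iff, h]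
  exact (by decide : ∀ i j : Fin 5,
    (∀ k, (cycleGraph 5).Adj i k ↔ (cycleGraph 5).Adj j k) → i = j) i j hnbr

end CoCyclic

theorem CoCyclic.fst_mul_snd_eq {R : Type*} [CommRing R] {x y : Multiplicative (R × R)}
    (h : CoCyclic x y) : x.toAdd.1 * y.toAdd.2 = x.toAdd.2 * y.toAdd.1 := by
  obtain ⟨z, hx, hy⟩ := h
  obtain ⟨m, rfl⟩ := Subgroup.mem_zpowers_iff.mp hx
  obtain ⟨n, rfl⟩ := Subgroup.mem_zpowers_iff.mp hy
  simp only [toAdd_zpow, Prod.smul_fst, Prod.smul_snd]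
  simp only [zsmul_eq_mul]
  ring

theorem coCyclic_ofAdd_of_nsmul_eq {A : Type*} [AddGroup A] {x y z : A} {m n : ℕ}
    (hx : m • z = x) (hy : n • z = y) : CoCyclic (ofAdd x) (ofAdd y) := by
  subst hx hy
  exact ⟨ofAdd z, by simpa only [ofAdd_nsmul] using Subgroup.npow_mem_zpowers _ m,
    by simpa only [ofAdd_nsmul] using Subgroup.npow_mem_zpowers _ n⟩

-- `a₁b₁, b₁c₂, a₂, b₂, a₁c₁` in additive notation
def pentagonVertex : Fin 5 → ZMod 30 × ZMod 30 := ![(25, 0), (10, 6), (0, 15), (0, 10), (21, 0)]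

theorem coCyclic_pentagonVertex_succ (i : Fin 5) :
    CoCyclic (ofAdd (pentagonVertex i)) (ofAdd (pentagonVertex (i + 1))) := by
  -- common generators `a₁b₁c₂, a₂b₁c₂, a₂b₂, a₁b₂c₁, a₁b₁c₁`
  fin_cases i
  · exact coCyclic_ofAdd_of_nsmul_eq (z := (25, 6)) (m := 25) (n := 16) (by decide) (by decide)
  · exact coCyclic_ofAdd_of_nsmul_eq (z := (10, 21)) (m := 16) (n := 15) (by decide) (by decide)
  · exact coCyclic_ofAdd_of_nsmul_eq (z := (0, 25)) (m := 3) (n := 4) (by decide) (by decide)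
  · exact coCyclic_ofAdd_of_nsmul_eq (z := (21, 10)) (m := 10) (n := 21) (by decide) (by decide)
  · exact coCyclic_ofAdd_of_nsmul_eq (z := (1, 0)) (m := 21) (n := 25) (by decide) (by decide)

theorem not_coCyclic_pentagonVertex_add_two (i : Fin 5) :
    ¬CoCyclic (ofAdd (pentagonVertex i)) (ofAdd (pentagonVertex (i + 2))) := fun h =>
  (by decide : ∀ i, (pentagonVertex i).1 * (pentagonVertex (i + 2)).2 ≠
    (pentagonVertex i).2 * (pentagonVertex (i + 2)).1) i h.fst_mul_snd_eq

/-- The enhanced power graph of `C₃₀ × C₃₀` contains an induced pentagon, and hence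
is not perfect. -/
theorem enhanced_C30xC30_not_perfect :
    Nonempty (SimpleGraph.cycleGraph 5 ↪g
        enhancedPowerGraph (Multiplicative (ZMod 30 × ZMod 30))) ∧
      ¬ (enhancedPowerGraph (Multiplicative (ZMod 30 × ZMod 30))).IsPerfect := by
  let f := pentagonEmbedding (fun i => ofAdd (pentagonVertex i))
    coCyclic_pentagonVertex_succ not_coCyclic_pentagonVertex_add_two
  exact ⟨⟨f⟩, not_isPerfect_of_cycleGraph_five_embedding f⟩
end

section
/- The enhanced power graph of the symmetric group Sₙ is perfect if and only if n ≤ 7. -/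
/-!
For `n ≤ 7` the enhanced power graph of `Sₙ` is a comparability graph, hence perfect. Rank the
element orders `1, 2, 4, 7, 10, 5, 12, 6, 3` of `S₇` in this order and orient every edge towards
the endpoint of larger rank, breaking ties arbitrarily. If `x → y → z`, with `x, y` in a cyclic
group of order `m₁` and `y, z` in one of order `m₂`, a finite check on the orders shows that one of
`x, z` or the two generators has order dividing that of `y`, hence lies in the cyclic group `⟨y⟩`;
then `x, z` lie in a common cyclic group, so the orientation is transitive. Colouring a vertex by
the size of the largest clique it tops is then a colouring with as many colours as a largest
clique.

For `n ≥ 8` the permutations `(0 1), (2 3 7), (5 6), (0 1 2 3 4), (5 6 7)` induce a 5-cycle: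
consecutive ones commute and have coprime orders, so they generate a cyclic group, while the other
pairs do not commute, except the two involutions `(0 1), (5 6)`, and a cyclic group has only one
involution. A 5-cycle needs three colours but has no triangle.
-/

open Equiv Function Finset Subgroup SimpleGraph

section CyclicSubgroups

variable {G : Type*} [Group G]

theorem pow_gcd_orderOf_mem_zpowers_pow (x : G) (k : ℕ) :
    x ^ (orderOf x).gcd k ∈ zpowers (x ^ k) := by
  refine ⟨(orderOf x).gcdB k, ?_⟩
  calc (x ^ k) ^ (orderOf x).gcdB k
      = x ^ ((orderOf x : ℤ) * (orderOf x).gcdA k + k * (orderOf x).gcdB k) := by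
        rw [zpow_add, zpow_mul, zpow_mul, zpow_natCast, zpow_natCast, pow_orderOf_eq_one,
          one_zpow, one_mul]
    _ = x ^ (orderOf x).gcd k := by rw [← Nat.gcd_eq_gcd_ab, zpow_natCast]

theorem mem_zpowers_of_orderOf_dvd_s18 {w u v : G} (hw : IsOfFinOrder w) (hu : u ∈ zpowers w)
    (hv : v ∈ zpowers w) (h : orderOf u ∣ orderOf v) : u ∈ zpowers v := by
  obtain ⟨m, rfl⟩ : ∃ m : ℕ, w ^ m = u := hw.mem_powers_iff_mem_zpowers.mpr hu
  obtain ⟨k, rfl⟩ : ∃ k : ℕ, w ^ k = v := hw.mem_powers_iff_mem_zpowers.mpr hv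
  set g := (orderOf w).gcd k
  have hg : 0 < orderOf w / g :=
    Nat.div_pos (Nat.gcd_le_left k hw.orderOf_pos) (Nat.gcd_pos_of_pos_left k hw.orderOf_pos)
  -- this is `u ^ orderOf v = 1`, as `orderOf v = orderOf w / g`
  have hgm : g * (orderOf w / g) ∣ m * (orderOf w / g) := by
    rw [Nat.mul_div_cancel' (Nat.gcd_dvd_left _ _), ← hw.orderOf_pow, orderOf_dvd_iff_pow_eq_one,
      pow_mul]
    exact orderOf_dvd_iff_pow_eq_one.mp h
  obtain ⟨q, rfl⟩ := Nat.dvd_of_mul_dvd_mul_right hg hgm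
  rw [pow_mul]
  exact zpowers_le.mpr (pow_gcd_orderOf_mem_zpowers_pow w k) (npow_mem_zpowers _ q)

theorem Commute.mem_zpowers_mul {x y : G} (h : Commute x y)
    (hco : (orderOf x).Coprime (orderOf y)) : x ∈ zpowers (x * y) := by
  have hx : x ^ orderOf y = (x * y) ^ orderOf y := by
    rw [h.mul_pow, pow_orderOf_eq_one, mul_one]
  have := pow_gcd_orderOf_mem_zpowers_pow x (orderOf y)
  rw [hco, pow_one, hx] at this
  exact zpowers_le.mpr (npow_mem_zpowers _ _) this

theorem mem_zpowers_or_mem_zpowers_of_dvd [Finite G] {x y z w₁ w₂ : G} (hx : x ∈ zpowers w₁)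
    (hy₁ : y ∈ zpowers w₁) (hy₂ : y ∈ zpowers w₂) (hz : z ∈ zpowers w₂)
    (h : orderOf w₁ ∣ orderOf y ∨ orderOf w₂ ∣ orderOf y ∨ orderOf x ∣ orderOf y ∨
      orderOf z ∣ orderOf y) :
    x ∈ zpowers w₂ ∨ z ∈ zpowers w₁ := by
  have hle {t w : G} (ht : t ∈ zpowers w) (hy : y ∈ zpowers w) (hd : orderOf t ∣ orderOf y) :
      zpowers t ≤ zpowers y :=
    zpowers_le.mpr (mem_zpowers_of_orderOf_dvd_s18 (isOfFinOrder_of_finite w) ht hy hd)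
  have h₁ := zpowers_le.mpr hy₁
  have h₂ := zpowers_le.mpr hy₂
  rcases h with h | h | h | h
  · exact .inl (h₂ (hle (mem_zpowers w₁) hy₁ h hx))
  · exact .inr (h₁ (hle (mem_zpowers w₂) hy₂ h hz))
  · exact .inl (h₂ (hle hx hy₁ h (mem_zpowers x)))
  · exact .inr (h₁ (hle hz hy₂ h (mem_zpowers z)))

end CyclicSubgroups

namespace SimpleGraph

variable {V : Type*} {G : SimpleGraph V}

section TransitiveOrientation

variable {α : Type*} [LinearOrder α] {f : V → α}

theorem chromaticNumber_eq_cliqueNum_of_transitive_orientation [Finite V] (hf : Injective f)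
    (htrans : ∀ ⦃x y z⦄, G.Adj x y → G.Adj y z → f x < f y → f y < f z → G.Adj x z) :
    G.chromaticNumber = G.cliqueNum := by
  classical
  have := Fintype.ofFinite V
  let IsTopClique (x : V) (t : Finset V) : Prop := G.IsClique t ∧ x ∈ t ∧ ∀ z ∈ t, f z ≤ f x
  have hex : ∀ x, ∃ t, IsTopClique x t ∧ ∀ t', IsTopClique x t' → #t' ≤ #t := fun x => by
    obtain ⟨t, ht, hmax⟩ := exists_max_image (univ.filter (IsTopClique x)) card
      ⟨{x}, by simp [IsTopClique]⟩
    exact ⟨t, (mem_filter.mp ht).2, fun t' ht' => hmax t' (by simpa using ht')⟩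
  choose t ht hmax using hex
  have hlt : ∀ ⦃x y⦄, G.Adj x y → f x < f y → #(t x) < #(t y) := by
    intro x y hxy hfxy
    obtain ⟨hcl, hx, hle⟩ := ht x
    have hy : y ∉ t x := fun hy => (hle y hy).not_gt hfxy
    have hins : IsTopClique y (insert y (t x)) := by
      refine ⟨?_, mem_insert_self y _, ?_⟩
      · rw [coe_insert]
        refine hcl.insert fun z hz hyz => ?_
        rcases eq_or_ne z x with rfl | hzx
        · exact hxy.symm
        · exact (htrans (hcl hz hx hzx) hxy ((hle z hz).lt_of_ne (hf.ne hzx)) hfxy).symm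
      · simp only [mem_insert, forall_eq_or_imp, le_refl, true_and]
        exact fun z hz => (hle z hz).trans hfxy.le
    calc #(t x) < #(insert y (t x)) := by rw [card_insert_of_notMem hy]; omega
      _ ≤ #(t y) := hmax y _ hins
  have hpos : ∀ x, 0 < #(t x) := fun x => card_pos.mpr ⟨x, (ht x).2.1⟩
  have hcol : G.Colorable G.cliqueNum := by
    refine ⟨Coloring.mk (fun x => ⟨#(t x) - 1, ?_⟩) fun {x y} hxy hc => ?_⟩
    · have := (ht x).1.card_le_cliqueNum
      have := hpos x
      omega
    · have := Fin.mk.inj_iff.mp hc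
      have := hpos x
      have := hpos y
      rcases lt_or_gt_of_ne (hf.ne hxy.ne) with h | h
      · exact (hlt hxy h).ne (by omega)
      · exact (hlt hxy.symm h).ne' (by omega)
  exact le_antisymm hcol.chromaticNumber_le G.cliqueNum_le_chromaticNumber

theorem isPerfect_of_transitive_orientation [Finite V] (hf : Injective f)
    (htrans : ∀ ⦃x y z⦄, G.Adj x y → G.Adj y z → f x < f y → f y < f z → G.Adj x z) :
    G.IsPerfect := fun _ =>
  chromaticNumber_eq_cliqueNum_of_transitive_orientation (f := f ∘ Subtype.val)
    (hf.comp Subtype.val_injective) fun _ _ _ => @htrans _ _ _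

end TransitiveOrientation

theorem not_isPerfect_of_cycleGraph_five_isIndContained (h : cycleGraph 5 ⊴ G) :
    ¬G.IsPerfect := by
  intro hG
  obtain ⟨s, ⟨e⟩⟩ := isIndContained_iff_exists_iso_induce.mp h
  have : Finite s := Finite.of_equiv _ e.toEquiv
  have hχ : (G.induce s).chromaticNumber = 3 := by
    rw [← chromaticNumber_congr e, chromaticNumber_cycleGraph_of_odd 5 (by norm_num) (by decide)]
  have hfree : (G.induce s).CliqueFree 3 :=
    CliqueFree.comap e.symm.isContained fun t => by revert t; decide
  obtain ⟨t, ht⟩ := (G.induce s).exists_isNClique_cliqueNum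
  have hω : (G.induce s).cliqueNum = 3 := by exact_mod_cast (hG s).symm.trans hχ
  exact hfree t (hω ▸ ht)

end SimpleGraph

section EnhancedPowerGraph

variable {G : Type*} [Group G] {x y : G}

theorem Commute.of_enhancedPowerGraph_adj (h : (enhancedPowerGraph G).Adj x y) :
    Commute x y := by
  obtain ⟨-, w, ⟨i, rfl⟩, ⟨j, rfl⟩⟩ := h
  exact (Commute.refl w).zpow_zpow i j

theorem enhancedPowerGraph_adj_of_commute (hne : x ≠ y) (h : Commute x y)
    (hco : (orderOf x).Coprime (orderOf y)) : (enhancedPowerGraph G).Adj x y :=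
  ⟨hne, x * y, h.mem_zpowers_mul hco, h.eq ▸ h.symm.mem_zpowers_mul hco.symm⟩

theorem mem_zpowers_of_enhancedPowerGraph_adj [Finite G] (h : (enhancedPowerGraph G).Adj x y)
    (hd : orderOf x ∣ orderOf y) : x ∈ zpowers y := by
  obtain ⟨-, w, hx, hy⟩ := h
  exact mem_zpowers_of_orderOf_dvd_s18 (isOfFinOrder_of_finite w) hx hy hd

-- Read `a, b, c` as the orders of a path `x → y → z` oriented by rank (position in `L`), and
-- `m₁, m₂` as the orders of cyclic groups containing `x, y` and `y, z`.
def IsTransitiveOrderRanking (L : List ℕ) : Prop :=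
  ∀ m₁ ∈ L, ∀ m₂ ∈ L, ∀ a ∈ L, ∀ b ∈ L, ∀ c ∈ L, a ∣ m₁ → b ∣ m₁ → b ∣ m₂ → c ∣ m₂ →
    L.idxOf a ≤ L.idxOf b → L.idxOf b ≤ L.idxOf c → m₁ ∣ b ∨ m₂ ∣ b ∨ a ∣ b ∨ c ∣ b

theorem enhancedPowerGraph_isPerfect_of_isTransitiveOrderRanking [Finite G] {L : List ℕ}
    (hL : ∀ g : G, orderOf g ∈ L) (hrank : IsTransitiveOrderRanking L) :
    (enhancedPowerGraph G).IsPerfect := by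
  let e := Finite.equivFin G
  refine isPerfect_of_transitive_orientation (f := fun g => toLex (L.idxOf (orderOf g), e g))
    (fun g g' h => ?_) ?_
  · exact e.injective (Prod.ext_iff.mp (toLex.injective h)).2
  rintro x y z ⟨-, w₁, hx, hy₁⟩ ⟨-, w₂, hy₂, hz⟩ hxy hyz
  have hd := hrank _ (hL w₁) _ (hL w₂) _ (hL x) _ (hL y) _ (hL z) (orderOf_dvd_of_mem_zpowers hx)
    (orderOf_dvd_of_mem_zpowers hy₁) (orderOf_dvd_of_mem_zpowers hy₂)
    (orderOf_dvd_of_mem_zpowers hz) (Prod.Lex.monotone_fst _ _ hxy.le)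
    (Prod.Lex.monotone_fst _ _ hyz.le)
  refine ⟨fun hxz => (hxy.trans hyz).ne (by rw [hxz]), ?_⟩
  rcases mem_zpowers_or_mem_zpowers_of_dvd hx hy₁ hy₂ hz hd with h | h
  exacts [⟨w₂, h, hz⟩, ⟨w₁, hx, h⟩]

end EnhancedPowerGraph

theorem cycleGraph_five_isIndContained_enhancedPowerGraph {G : Type*} [Group G] [Finite G]
    {v : Fin 5 → G} (hv : Injective v)
    (hcomm : ∀ i j, Commute (v i) (v j) ↔
      i = j ∨ (cycleGraph 5).Adj i j ∨ (i, j) = (0, 2) ∨ (i, j) = (2, 0))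
    (hord : ∀ i, orderOf (v i) = ![2, 3, 2, 5, 3] i) :
    cycleGraph 5 ⊴ enhancedPowerGraph G := by
  -- equal orders would put `v 0` in `⟨v 2⟩`, but `v 3` commutes with `v 2` and not with `v 0`
  have h02 : ¬(enhancedPowerGraph G).Adj (v 0) (v 2) := fun h => by
    obtain ⟨k, hk⟩ := mem_zpowers_of_enhancedPowerGraph_adj h (by rw [hord, hord]; decide)
    exact (hcomm 0 3).not.mpr (by decide) (hk ▸ ((hcomm 2 3).mpr (by decide)).zpow_left k)
  refine ⟨⟨⟨v, hv⟩, fun {i j} => ?_⟩⟩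
  show (enhancedPowerGraph G).Adj (v i) (v j) ↔ _
  by_cases hij : (cycleGraph 5).Adj i j
  · refine iff_of_true (enhancedPowerGraph_adj_of_commute (hv.ne hij.ne)
      ((hcomm i j).mpr (.inr (.inl hij))) ?_) hij
    rw [hord, hord]
    revert i j
    decide
  · refine iff_of_false (fun hadj => ?_) hij
    rcases (hcomm i j).mp (.of_enhancedPowerGraph_adj hadj) with rfl | h | h | h
    · exact hadj.ne rfl
    · exact hij h
    · obtain ⟨rfl, rfl⟩ := Prod.ext_iff.mp h
      exact h02 hadj
    · obtain ⟨rfl, rfl⟩ := Prod.ext_iff.mp h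
      exact h02 hadj.symm

theorem Multiset.lcm_dvd_of_sum_le_seven {M : Multiset ℕ} (h2 : ∀ a ∈ M, 2 ≤ a)
    (hsum : M.sum ≤ 7) : M.lcm ∣ 12 ∨ M.lcm ∣ 10 ∨ M.lcm ∣ 7 := by
  classical
  have hle : ∀ a ∈ M, a ≤ 7 := fun a ha =>
    (single_le_sum (fun _ _ => Nat.zero_le _) a ha).trans hsum
  have hpair : ∀ a ∈ M, ∀ b ∈ M, b ≠ a → a + b ≤ 7 := fun a ha b hb hba => by
    rw [← cons_erase ha, sum_cons] at hsum
    have := single_le_sum (fun _ _ => Nat.zero_le _) b ((mem_erase_of_ne hba).mpr hb)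
    omega
  simp only [lcm_dvd]
  by_cases h7 : 7 ∈ M
  · refine Or.inr (Or.inr fun b hb => ?_)
    by_contra hb7
    have := hpair 7 h7 b hb (by rintro rfl; exact hb7 dvd_rfl)
    have := h2 b hb
    omega
  by_cases h5 : 5 ∈ M
  · refine Or.inr (Or.inl fun b hb => ?_)
    obtain rfl | hb5 := eq_or_ne b 5
    · norm_num
    · have : b = 2 := by have := hpair 5 h5 b hb hb5; have := h2 b hb; omega
      norm_num [this]
  · refine Or.inl fun b hb => ?_
    have : ∀ b ≤ 7, 2 ≤ b → b ≠ 5 → b ≠ 7 → b ∣ 12 := by decide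
    exact this b (hle b hb) (h2 b hb) (by rintro rfl; exact h5 hb) (by rintro rfl; exact h7 hb)

-- the element orders of `S₇`, listed in the rank order used to orient its enhanced power graph
def sevenOrders : List ℕ := [1, 2, 4, 7, 10, 5, 12, 6, 3]

theorem orderOf_mem_sevenOrders {α : Type*} [Fintype α] [DecidableEq α]
    (hα : Fintype.card α ≤ 7) (σ : Perm α) : orderOf σ ∈ sevenOrders := by
  have hsum : σ.cycleType.sum ≤ 7 := by
    rw [Perm.sum_cycleType]
    exact (card_le_univ _).trans hα
  have hdiv : ∀ m ∈ [12, 10, 7], ∀ d ∈ m.divisors, d ∈ sevenOrders := by decide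
  rw [← Perm.lcm_cycleType]
  rcases Multiset.lcm_dvd_of_sum_le_seven (fun _ => Perm.two_le_of_mem_cycleType) hsum with
    h | h | h <;> exact hdiv _ (by simp) _ (Nat.mem_divisors.mpr ⟨h, by norm_num⟩)

theorem isTransitiveOrderRanking_sevenOrders : IsTransitiveOrderRanking sevenOrders := by
  unfold IsTransitiveOrderRanking
  decide +kernel

def pentagon : Fin 5 → Perm (Fin 8) :=
  ![[0, 1].formPerm, [2, 3, 7].formPerm, [5, 6].formPerm, [0, 1, 2, 3, 4].formPerm,
    [5, 6, 7].formPerm]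

theorem pentagon_injective : Injective pentagon := by decide

theorem commute_pentagon_iff (i j : Fin 5) :
    Commute (pentagon i) (pentagon j) ↔
      i = j ∨ (cycleGraph 5).Adj i j ∨ (i, j) = (0, 2) ∨ (i, j) = (2, 0) := by
  unfold Commute SemiconjBy
  revert i j
  decide +kernel

theorem orderOf_pentagon (i : Fin 5) : orderOf (pentagon i) = ![2, 3, 2, 5, 3] i := by
  have hpow : pentagon i ^ ![2, 3, 2, 5, 3] i = 1 := by revert i; decide +kernel
  have hne : pentagon i ≠ 1 := by revert i; decide +kernel
  have : Fact (![2, 3, 2, 5, 3] i).Prime := ⟨by fin_cases i <;> norm_num⟩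
  exact orderOf_eq_prime hpow hne

theorem cycleGraph_five_isIndContained_enhancedPowerGraph_perm {n : ℕ} (hn : 8 ≤ n) :
    cycleGraph 5 ⊴ enhancedPowerGraph (Perm (Fin n)) := by
  set φ := Perm.viaEmbeddingHom (Fin.castLEEmb hn)
  have hφ : Injective φ := Perm.viaEmbeddingHom_injective _
  refine cycleGraph_five_isIndContained_enhancedPowerGraph (v := φ ∘ pentagon)
    (hφ.comp pentagon_injective) (fun i j => ?_) (fun i => ?_)
  · rw [comp_apply, comp_apply, commute_map_iff hφ, commute_pentagon_iff]
  · rw [comp_apply, orderOf_injective φ hφ, orderOf_pentagon]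

/-- The enhanced power graph of the symmetric group `Sₙ` is perfect iff `n ≤ 7`. -/
theorem enhanced_symmetricGroup_isPerfect_iff (n : ℕ) :
    (enhancedPowerGraph (Equiv.Perm (Fin n))).IsPerfect ↔ n ≤ 7 := by
  refine ⟨fun h => ?_, fun hn => ?_⟩
  · by_contra! hn
    exact not_isPerfect_of_cycleGraph_five_isIndContained
      (cycleGraph_five_isIndContained_enhancedPowerGraph_perm hn) h
  · exact enhancedPowerGraph_isPerfect_of_isTransitiveOrderRanking
      (orderOf_mem_sevenOrders (by simpa using hn)) isTransitiveOrderRanking_sevenOrders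
end
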